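/- arXiv:2401.10933 — 8 statements merged into one kernel-verified Lean document; each statement's English description precedes it below -/
import Mathlib

section
/- Let ω be a weight function satisfying: for every q > q₀ with q₀ > 1/2 there exists C_q ≥ 1 such that ω(s+t) ≤ q(ω(s)+ω(t)) + C_q for all s,t ≥ 0. Then γ(ω) ≥ log 2 / (log 2 + log q₀) > 0. If this holds with q₀ = 1/2, then γ(ω) = +∞. -/
open Filter

/-- A weight function: non-decreasing on `[0,∞)`, non-negative, tending to `+∞`. -/
def IsWeight (ω : ℝ → ℝ) : Prop :=
  (∀ t, 0 ≤ ω t) ∧ MonotoneOn ω (Set.Ici (0 : ℝ)) ∧ Tendsto ω atTop atTop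

/-- Property `P(ω,γ)`: there is `K > 1` with `limsup_{t→∞} ω(K^γ t)/ω(t) < K`. -/
def PropP (ω : ℝ → ℝ) (γ : ℝ) : Prop :=
  ∃ K : ℝ, 1 < K ∧ limsup (fun t => ω (K ^ γ * t) / ω t) atTop < K

/-- The growth index `γ(ω) = sup {γ > 0 : P(ω,γ)} ∈ [0,∞]` (`0` if the set is empty). -/
noncomputable def gammaIdx (ω : ℝ → ℝ) : ENNReal :=
  ⨆ γ ∈ {γ : ℝ | 0 < γ ∧ PropP ω γ}, ENNReal.ofReal γ

/-- Key lemma: if `2*q₀ < 2^(1/γ)`, then `P(ω,γ)` holds. -/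
lemma key_propP (ω : ℝ → ℝ) (hω : IsWeight ω) (q₀ : ℝ) (hq₀ : 1/2 ≤ q₀)
    (h : ∀ q > q₀, ∃ C ≥ (1 : ℝ), ∀ s ≥ (0 : ℝ), ∀ t ≥ (0 : ℝ),
      ω (s + t) ≤ q * (ω s + ω t) + C)
    (γ : ℝ) (hγ : 0 < γ) (hlt : 2 * q₀ < (2 : ℝ) ^ (1/γ)) : PropP ω γ := by
  obtain ⟨hnn, hmono, htend⟩ := hω
  obtain ⟨K, hKdef⟩ : ∃ K : ℝ, K = (2 : ℝ) ^ (1/γ) := ⟨_, rfl⟩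
  rw [← hKdef] at hlt
  have hK1 : 1 < K := by
    have : (1:ℝ) ≤ 2 * q₀ := by linarith
    linarith
  have hKγ : K ^ γ = 2 := by
    rw [hKdef, ← Real.rpow_mul (by norm_num : (0:ℝ) ≤ 2), one_div_mul_cancel hγ.ne',
      Real.rpow_one]
  obtain ⟨q, hqdef⟩ : ∃ q : ℝ, q = q₀ / 2 + K / 4 := ⟨_, rfl⟩
  have hq : q₀ < q := by rw [hqdef]; linarith
  have h2q : 2 * q < K := by rw [hqdef]; linarith
  have hqpos : 0 < q := by linarith
  obtain ⟨C, hC1, hC⟩ := h q hq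
  refine ⟨K, hK1, ?_⟩
  obtain ⟨δ, hδdef⟩ : ∃ δ : ℝ, δ = K - 2 * q := ⟨_, rfl⟩
  have hδ : 0 < δ := by rw [hδdef]; linarith
  have hev : ∀ᶠ t in atTop, ω (K ^ γ * t) / ω t ≤ 2 * q + δ / 2 := by
    have h1 : ∀ᶠ t in atTop, max 1 (2 * C / δ) ≤ ω t := htend.eventually_ge_atTop _
    filter_upwards [h1, eventually_ge_atTop (0 : ℝ)] with t hωt ht0
    have hωpos : 0 < ω t := lt_of_lt_of_le one_pos (le_trans (le_max_left _ _) hωt)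
    have hsub : ω (2 * t) ≤ 2 * q * ω t + C := by
      have := hC t ht0 t ht0
      rw [two_mul]
      linarith
    have h2 : 2 * C / δ ≤ ω t := le_trans (le_max_right _ _) hωt
    have h3 : 2 * C ≤ δ * ω t := by
      rw [div_le_iff₀ hδ] at h2; linarith
    have h4 : C ≤ δ / 2 * ω t := by linarith
    rw [hKγ, div_le_iff₀ hωpos]
    nlinarith [hsub, h4]
  have hcob : IsCoboundedUnder (· ≤ ·) atTop (fun t => ω (K ^ γ * t) / ω t) :=
    isCoboundedUnder_le_of_le atTop (fun t => div_nonneg (hnn _) (hnn _))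
  calc limsup (fun t => ω (K ^ γ * t) / ω t) atTop ≤ 2 * q + δ / 2 :=
        limsup_le_of_le hcob hev
    _ < K := by rw [hδdef]; linarith

theorem almost_subadd_gammaIdx (ω : ℝ → ℝ) (hω : IsWeight ω) (q₀ : ℝ) (hq₀ : 1/2 ≤ q₀)
    (h : ∀ q > q₀, ∃ C ≥ (1 : ℝ), ∀ s ≥ (0 : ℝ), ∀ t ≥ (0 : ℝ),
      ω (s + t) ≤ q * (ω s + ω t) + C) :
    (1/2 < q₀ →
      0 < Real.log 2 / (Real.log 2 + Real.log q₀) ∧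
      ENNReal.ofReal (Real.log 2 / (Real.log 2 + Real.log q₀)) ≤ gammaIdx ω) ∧
    (q₀ = 1/2 → gammaIdx ω = ⊤) := by
  constructor
  · intro hq₀'
    have hq₀pos : 0 < q₀ := by linarith
    have h2q₀ : 1 < 2 * q₀ := by linarith
    have hL : Real.log 2 + Real.log q₀ = Real.log (2 * q₀) := by
      rw [Real.log_mul (by norm_num) hq₀pos.ne']
    have hLpos : 0 < Real.log (2 * q₀) := Real.log_pos h2q₀
    have hlog2 : 0 < Real.log 2 := Real.log_pos one_lt_two
    set γ₀ : ℝ := Real.log 2 / (Real.log 2 + Real.log q₀) with hγ₀def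
    have hγ₀pos : 0 < γ₀ := by
      rw [hγ₀def, hL]; positivity
    refine ⟨hγ₀pos, ?_⟩
    apply ENNReal.le_of_forall_nnreal_lt
    intro r hr
    have hrR : (r : ℝ) < γ₀ := by
      rw [← ENNReal.ofReal_coe_nnreal, ENNReal.ofReal_lt_ofReal_iff hγ₀pos] at hr
      exact hr
    set γ' : ℝ := ((r : ℝ) + γ₀) / 2 with hγ'def
    have hγ'pos : 0 < γ' := by
      have : (0:ℝ) ≤ (r : ℝ) := r.coe_nonneg
      rw [hγ'def]; linarith
    have hγ'lt : γ' < γ₀ := by rw [hγ'def]; linarith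
    have hP : PropP ω γ' := by
      apply key_propP ω hω q₀ hq₀ h γ' hγ'pos
      have heq : 2 * q₀ = (2 : ℝ) ^ Real.logb 2 (2 * q₀) :=
        (Real.rpow_logb (by norm_num) (by norm_num) (by linarith)).symm
      rw [heq]
      apply Real.rpow_lt_rpow_left_iff (x := 2) one_lt_two |>.mpr
      have hlogb : Real.logb 2 (2 * q₀) = Real.log (2 * q₀) / Real.log 2 := rfl
      rw [hlogb, div_lt_div_iff₀ hlog2 hγ'pos]
      have : γ' * Real.log (2 * q₀) < γ₀ * Real.log (2 * q₀) := by
        exact mul_lt_mul_of_pos_right hγ'lt hLpos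
      have hγ₀eq : γ₀ * Real.log (2 * q₀) = Real.log 2 := by
        rw [hγ₀def, hL, div_mul_cancel₀ _ hLpos.ne']
      linarith
    calc (r : ENNReal) = ENNReal.ofReal (r : ℝ) := ENNReal.ofReal_coe_nnreal.symm
      _ ≤ ENNReal.ofReal γ' := ENNReal.ofReal_le_ofReal (by rw [hγ'def]; linarith)
      _ ≤ gammaIdx ω := le_iSup₂ (f := fun γ (_ : γ ∈ {γ : ℝ | 0 < γ ∧ PropP ω γ}) => ENNReal.ofReal γ) γ' ⟨hγ'pos, hP⟩
  · intro hq₀'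
    rw [eq_top_iff, ← ENNReal.iSup_natCast]
    apply iSup_le
    intro n
    have hγpos : (0:ℝ) < n + 1 := by positivity
    have hP : PropP ω (n + 1) := by
      apply key_propP ω hω q₀ hq₀ h _ hγpos
      rw [hq₀']
      norm_num
      exact Real.one_lt_rpow_iff_of_pos (by norm_num) |>.mpr (Or.inl ⟨one_lt_two, by positivity⟩)
    calc (n : ENNReal) = ENNReal.ofReal n := (ENNReal.ofReal_natCast n).symm
      _ ≤ ENNReal.ofReal ((n : ℝ) + 1) := ENNReal.ofReal_le_ofReal (by linarith)
      _ ≤ gammaIdx ω := le_iSup₂ (f := fun γ (_ : γ ∈ {γ : ℝ | 0 < γ ∧ PropP ω γ}) => ENNReal.ofReal γ) ((n : ℝ) + 1) ⟨hγpos, hP⟩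
end

section
/- Every almost subadditive weight function ω (i.e. for all q > 1 there exists C_q ≥ 1 such that ω(s+t) ≤ q(ω(s)+ω(t)) + C_q for all s,t ≥ 0) satisfies γ(ω) ≥ 1. -/
open Filter

lemma iter_bound (ω : ℝ → ℝ) (hpos : ∀ t, 0 ≤ ω t) (q C : ℝ) (hq : 1 < q) (hC : 1 ≤ C)
    (hsub : ∀ s ≥ (0:ℝ), ∀ t ≥ (0:ℝ), ω (s + t) ≤ q * (ω s + ω t) + C) :
    ∀ n : ℕ, 1 ≤ n → ∀ t ≥ (0:ℝ), ω ((n : ℝ) * t) ≤ q ^ n * n * (ω t + C) := by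
  intro n hn
  induction n, hn using Nat.le_induction with
  | base =>
    intro t ht
    have := hpos t
    simp only [Nat.cast_one, one_mul, pow_one, mul_one]
    nlinarith
  | succ n hn ih =>
    intro t ht
    have hnt : (0:ℝ) ≤ (n : ℝ) * t := by positivity
    have hq1 : (1:ℝ) ≤ q := hq.le
    have hqn1 : (1:ℝ) ≤ q ^ (n + 1) := one_le_pow₀ hq1
    have e1 : q * ω t ≤ q ^ (n + 1) * ω t := by
      apply mul_le_mul_of_nonneg_right _ (hpos t)
      calc q = q ^ 1 := (pow_one q).symm
        _ ≤ q ^ (n + 1) := pow_le_pow_right₀ hq1 (by omega)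
    have e2 : C ≤ q ^ (n + 1) * C := le_mul_of_one_le_left (by linarith) hqn1
    have step : ω ((↑(n + 1) : ℝ) * t) ≤ q * (ω ((n : ℝ) * t) + ω t) + C := by
      have : ((↑(n + 1) : ℝ)) * t = (n : ℝ) * t + t := by push_cast; ring
      rw [this]
      exact hsub _ hnt _ ht
    have ihb := ih t ht
    have hωt := hpos t
    have hωnt := hpos ((n : ℝ) * t)
    calc ω ((↑(n + 1) : ℝ) * t) ≤ q * (ω ((n : ℝ) * t) + ω t) + C := step
      _ ≤ q * (q ^ n * n * (ω t + C) + ω t) + C := by nlinarith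
      _ = q ^ (n + 1) * n * (ω t + C) + (q * ω t + C) := by ring
      _ ≤ q ^ (n + 1) * n * (ω t + C) + (q ^ (n + 1) * ω t + q ^ (n + 1) * C) := by
          linarith
      _ = q ^ (n + 1) * (↑(n + 1) : ℝ) * (ω t + C) := by push_cast; ring

lemma propP_of_almost_subadd (ω : ℝ → ℝ) (hω : IsWeight ω)
    (h : ∀ q > (1 : ℝ), ∃ C ≥ (1 : ℝ), ∀ s ≥ (0 : ℝ), ∀ t ≥ (0 : ℝ),
      ω (s + t) ≤ q * (ω s + ω t) + C)
    (γ : ℝ) (hγ : γ ∈ Set.Ioo (0:ℝ) 1) : PropP ω γ := by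
  obtain ⟨hγ0, hγ1⟩ := hγ
  obtain ⟨hpos, hmono, htends⟩ := hω
  -- choose K with K^(1-γ) = 6
  set K : ℝ := 6 ^ ((1 - γ)⁻¹) with hKdef
  have h1γ : (0:ℝ) < 1 - γ := by linarith
  have hK1 : (1:ℝ) < K := by
    rw [hKdef]
    exact (Real.one_lt_rpow_iff_of_pos (by norm_num)).mpr (Or.inl ⟨by norm_num, by positivity⟩)
  have hK0 : (0:ℝ) < K := by linarith
  have hK1γ : K ^ (1 - γ) = 6 := by
    rw [hKdef, ← Real.rpow_mul (by norm_num), inv_mul_cancel₀ h1γ.ne', Real.rpow_one]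
  have hKγ0 : (0:ℝ) < K ^ γ := Real.rpow_pos_of_pos hK0 γ
  have hKγ1 : (1:ℝ) < K ^ γ := Real.one_lt_rpow_iff_of_pos hK0 |>.mpr (Or.inl ⟨hK1, hγ0⟩)
  have hKg : K = 6 * K ^ γ := by
    have : K ^ γ * K ^ (1 - γ) = K := by
      rw [← Real.rpow_add hK0]; norm_num
    rw [hK1γ] at this; linarith
  -- N = ceil of K^γ
  set N : ℕ := ⌈K ^ γ⌉₊ with hNdef
  have hN1 : 1 ≤ N := Nat.one_le_iff_ne_zero.mpr (by
    simp only [hNdef, ne_eq, Nat.ceil_eq_zero, not_le]; linarith)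
  have hNpos : (0:ℝ) < N := by exact_mod_cast hN1
  have hKγN : K ^ γ ≤ (N : ℝ) := Nat.le_ceil _
  have hNle : (N : ℝ) ≤ K ^ γ + 1 := by
    have := Nat.ceil_lt_add_one (le_of_lt hKγ0)
    rw [← hNdef] at this; linarith
  -- q = 2^(1/N)
  set q : ℝ := 2 ^ ((N : ℝ)⁻¹) with hqdef
  have hq1 : (1:ℝ) < q := by
    rw [hqdef]
    exact (Real.one_lt_rpow_iff_of_pos (by norm_num)).mpr (Or.inl ⟨by norm_num, by positivity⟩)
  have hqN : q ^ N = 2 := by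
    rw [hqdef, ← Real.rpow_natCast (2 ^ ((N:ℝ)⁻¹)) N, ← Real.rpow_mul (by norm_num),
      inv_mul_cancel₀ hNpos.ne', Real.rpow_one]
  obtain ⟨C, hC, hsub⟩ := h q hq1
  have key := iter_bound ω hpos q C hq1 hC hsub N hN1
  refine ⟨K, hK1, ?_⟩
  have hbound : ∀ᶠ t in atTop, ω (K ^ γ * t) / ω t ≤ 2 * N + 1 := by
    have h1 : ∀ᶠ t in atTop, max 1 (2 * N * C) ≤ ω t := htends.eventually_ge_atTop _
    filter_upwards [h1, eventually_ge_atTop (0:ℝ)] with t hωt ht0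
    have hωt1 : (1:ℝ) ≤ ω t := le_trans (le_max_left _ _) hωt
    have hωtC : 2 * N * C ≤ ω t := le_trans (le_max_right _ _) hωt
    have hωt0 : (0:ℝ) < ω t := by linarith
    rw [div_le_iff₀ hωt0]
    have m1 : ω (K ^ γ * t) ≤ ω ((N : ℝ) * t) := by
      apply hmono (Set.mem_Ici.mpr (by positivity)) (Set.mem_Ici.mpr (by positivity))
      exact mul_le_mul_of_nonneg_right hKγN ht0
    have m2 : ω ((N : ℝ) * t) ≤ q ^ N * N * (ω t + C) := key t ht0
    rw [hqN] at m2
    nlinarith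
  have hcob : IsCoboundedUnder (· ≤ ·) atTop (fun t => ω (K ^ γ * t) / ω t) := by
    apply isCoboundedUnder_le_of_eventually_le atTop (x := 0)
    filter_upwards with t
    exact div_nonneg (hpos _) (hpos _)
  refine lt_of_le_of_lt (limsup_le_of_le hcob hbound) ?_
  rw [hKg]
  nlinarith

theorem almost_subadd_gammaIdx_ge_one (ω : ℝ → ℝ) (hω : IsWeight ω)
    (h : ∀ q > (1 : ℝ), ∃ C ≥ (1 : ℝ), ∀ s ≥ (0 : ℝ), ∀ t ≥ (0 : ℝ),
      ω (s + t) ≤ q * (ω s + ω t) + C) :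
    1 ≤ gammaIdx ω := by
  have key : ∀ γ ∈ Set.Ioo (0:ℝ) 1, ENNReal.ofReal γ ≤ gammaIdx ω := by
    intro γ hγ
    exact le_biSup (fun γ => ENNReal.ofReal γ) ⟨hγ.1, propP_of_almost_subadd ω hω h γ hγ⟩
  refine le_of_forall_lt fun c hc => ?_
  have hc' : c ≠ ⊤ := (hc.trans_le le_top).ne
  set r := c.toReal with hr
  have hr1 : r < 1 := by
    rw [hr]
    exact ENNReal.toReal_lt_of_lt_ofReal (by simpa using hc)
  have hr0 : 0 ≤ r := ENNReal.toReal_nonneg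
  set γ := (r + 1) / 2 with hγdef
  have hγmem : γ ∈ Set.Ioo (0:ℝ) 1 := by
    constructor <;> [positivity; linarith]
  calc c = ENNReal.ofReal r := (ENNReal.ofReal_toReal hc').symm
    _ < ENNReal.ofReal γ := by
        rw [ENNReal.ofReal_lt_ofReal_iff hγmem.1]
        linarith
    _ ≤ gammaIdx ω := key γ hγmem
end

section
/- If a weight function ω satisfies: there exists C ≥ 1 with ω(t²) ≤ C·ω(t) + C for all t ≥ 0, then γ(ω) = +∞, i.e. property P(ω,γ) holds for every γ > 0. -/
open Filter

theorem square_growth_gammaIdx_top (ω : ℝ → ℝ) (hω : IsWeight ω)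
    (h : ∃ C ≥ (1 : ℝ), ∀ t ≥ (0 : ℝ), ω (t ^ (2 : ℝ)) ≤ C * ω t + C) :
    gammaIdx ω = ⊤ ∧ ∀ γ : ℝ, 0 < γ → PropP ω γ := by
  obtain ⟨hnn, hmono, htend⟩ := hω
  obtain ⟨C, hC1, hC⟩ := h
  have hP : ∀ γ : ℝ, 0 < γ → PropP ω γ := by
    intro γ hγ
    refine ⟨2 * C + 1, by linarith, ?_⟩
    have hK0 : (0:ℝ) < 2 * C + 1 := by linarith
    have hKpow : (0:ℝ) < (2 * C + 1) ^ γ := Real.rpow_pos_of_pos hK0 γ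
    -- eventually the ratio is ≤ 2C
    have hev : ∀ᶠ t in atTop, ω ((2 * C + 1) ^ γ * t) / ω t ≤ 2 * C := by
      have h1 : ∀ᶠ t in atTop, (1:ℝ) ≤ ω t := htend.eventually_ge_atTop 1
      have h2 : ∀ᶠ t : ℝ in atTop, (2 * C + 1) ^ γ ≤ t := eventually_ge_atTop _
      filter_upwards [h1, h2, eventually_ge_atTop (0:ℝ)] with t h1 h2 ht0
      have hle : (2 * C + 1) ^ γ * t ≤ t ^ (2:ℝ) := by
        rw [show t ^ (2:ℝ) = t * t by
          rw [show (2:ℝ) = ((2:ℕ):ℝ) by norm_num, Real.rpow_natCast]; ring]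
        exact mul_le_mul_of_nonneg_right h2 ht0
      have hω1 : ω ((2 * C + 1) ^ γ * t) ≤ ω (t ^ (2:ℝ)) :=
        hmono (Set.mem_Ici.mpr (by positivity)) (Set.mem_Ici.mpr (by positivity)) hle
      have hω2 : ω ((2 * C + 1) ^ γ * t) ≤ C * ω t + C :=
        hω1.trans (hC t ht0)
      have hωt : (0:ℝ) < ω t := lt_of_lt_of_le one_pos h1
      rw [div_le_iff₀ hωt]
      calc ω ((2 * C + 1) ^ γ * t) ≤ C * ω t + C := hω2
        _ ≤ C * ω t + C * ω t := by nlinarith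
        _ = 2 * C * ω t := by ring
    have hcb : IsCoboundedUnder (· ≤ ·) atTop (fun t => ω ((2 * C + 1) ^ γ * t) / ω t) :=
      isCoboundedUnder_le_of_le atTop (x := 0) fun t => div_nonneg (hnn _) (hnn _)
    have hls : limsup (fun t => ω ((2 * C + 1) ^ γ * t) / ω t) atTop ≤ 2 * C :=
      limsup_le_of_le hcb hev
    exact lt_of_le_of_lt hls (by linarith)
  refine ⟨?_, hP⟩
  rw [eq_top_iff, ← ENNReal.iSup_natCast]
  refine iSup_le fun n => ?_
  have hmem : (0:ℝ) < (n:ℝ) + 1 ∧ PropP ω ((n:ℝ) + 1) :=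
    ⟨by positivity, hP _ (by positivity)⟩
  calc (n : ENNReal) ≤ ENNReal.ofReal ((n:ℝ) + 1) := by
        rw [show ((n:ℝ) + 1) = ((n + 1 : ℕ) : ℝ) by push_cast; ring, ENNReal.ofReal_natCast]
        exact_mod_cast Nat.le_succ n
    _ ≤ gammaIdx ω := le_iSup₂ (f := fun γ _ => ENNReal.ofReal γ) ((n:ℝ) + 1) hmem
end

section
/- Let ω be a weight function with γ(ω) < +∞ and let a₁ > a₂ > 0 with 1/a₁ > γ(ω). Then ω^{1/a₁} and ω^{1/a₂} are not equivalent, where σ ∼ τ means τ = O(σ) and σ = O(τ) as t → ∞. -/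
open Filter

/-- Equivalence of weight functions: `σ = O(τ)` and `τ = O(σ)` as `t → ∞`. -/
def WEquiv (σ τ : ℝ → ℝ) : Prop :=
  (∃ C > (0 : ℝ), ∀ᶠ t in atTop, σ t ≤ C * τ t) ∧
  (∃ C > (0 : ℝ), ∀ᶠ t in atTop, τ t ≤ C * σ t)

/-- If `ω(s^b) ≤ C ω(s)` eventually for some `b > 1`, then `P(ω,γ)` for every `γ`. -/
lemma propP_of_rpow_bound (ω : ℝ → ℝ) (hω : IsWeight ω) (C b : ℝ) (hb : 1 < b)
    (hC : ∀ᶠ s in atTop, ω (s ^ b) ≤ C * ω s) (γ : ℝ) : PropP ω γ := by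
  obtain ⟨h0, hmono, htop⟩ := hω
  set M : ℝ := max C 1 with hM
  refine ⟨M + 1, by have := le_max_right C 1; linarith, ?_⟩
  have hKpos : (0:ℝ) < M + 1 := by positivity
  have hbound : ∀ᶠ t in atTop, ω ((M + 1) ^ γ * t) / ω t ≤ M := by
    have hpow : Tendsto (fun t : ℝ => t ^ (b - 1)) atTop atTop :=
      tendsto_rpow_atTop (by linarith)
    filter_upwards [hC, htop.eventually_ge_atTop 1, eventually_ge_atTop (1:ℝ),
      hpow.eventually_ge_atTop ((M + 1) ^ γ)] with t hCt hω1 ht1 hpt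
    have ht0 : (0:ℝ) < t := lt_of_lt_of_le one_pos ht1
    have hle : (M + 1) ^ γ * t ≤ t ^ b := by
      rw [show b = (b - 1) + 1 by ring, Real.rpow_add ht0, Real.rpow_one]
      exact mul_le_mul_of_nonneg_right hpt ht0.le
    have h1 : ω ((M + 1) ^ γ * t) ≤ ω (t ^ b) := by
      refine hmono ?_ ?_ hle
      · exact Set.mem_Ici.2 (by positivity)
      · exact Set.mem_Ici.2 (Real.rpow_nonneg ht0.le b)
    have h2 : ω (t ^ b) ≤ M * ω t :=
      hCt.trans (mul_le_mul_of_nonneg_right (le_max_left C 1) (h0 t))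
    rw [div_le_iff₀ (lt_of_lt_of_le one_pos hω1)]
    exact h1.trans h2
  have hcob : IsCoboundedUnder (· ≤ ·) atTop (fun t => ω ((M + 1) ^ γ * t) / ω t) :=
    isCoboundedUnder_le_of_le atTop (x := 0) fun t => div_nonneg (h0 _) (h0 _)
  calc limsup (fun t => ω ((M + 1) ^ γ * t) / ω t) atTop
      ≤ M := limsup_le_of_le hcob hbound
    _ < M + 1 := lt_add_one M

theorem powers_not_equivalent (ω : ℝ → ℝ) (hω : IsWeight ω) (hfin : gammaIdx ω ≠ ⊤)
    (a₁ a₂ : ℝ) (h₂ : 0 < a₂) (h₁₂ : a₂ < a₁)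
    (ha₁ : gammaIdx ω < ENNReal.ofReal (1 / a₁)) :
    ¬ WEquiv (fun t => ω (t ^ (1/a₁))) (fun t => ω (t ^ (1/a₂))) := by
  rintro ⟨-, C, hCpos, hC⟩
  have ha₁pos : 0 < a₁ := h₂.trans h₁₂
  -- transfer to `ω (s ^ (a₁/a₂)) ≤ C * ω s`
  have hmap : ∀ᶠ s in atTop,
      ω ((s ^ a₁) ^ (1/a₂)) ≤ C * ω ((s ^ a₁) ^ (1/a₁)) :=
    (tendsto_rpow_atTop ha₁pos).eventually hC
  have hC' : ∀ᶠ s in atTop, ω (s ^ (a₁ / a₂)) ≤ C * ω s := by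
    filter_upwards [hmap, eventually_ge_atTop (0:ℝ)] with s hs hs0
    rw [← Real.rpow_mul hs0, ← Real.rpow_mul hs0, mul_one_div_cancel ha₁pos.ne',
      Real.rpow_one, mul_one_div] at hs
    exact hs
  have hP : ∀ γ : ℝ, PropP ω γ :=
    propP_of_rpow_bound ω hω C (a₁ / a₂) ((one_lt_div h₂).2 h₁₂) hC'
  -- conclude gammaIdx ω = ⊤
  set γ₀ : ℝ := (gammaIdx ω).toReal + 1 with hγ₀
  have hγ₀pos : 0 < γ₀ := by positivity
  have hle : ENNReal.ofReal γ₀ ≤ gammaIdx ω :=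
    le_biSup (fun γ => ENNReal.ofReal γ) (show γ₀ ∈ {γ : ℝ | 0 < γ ∧ PropP ω γ} from ⟨hγ₀pos, hP γ₀⟩)
  have hlt : gammaIdx ω < ENNReal.ofReal γ₀ := by
    conv_lhs => rw [← ENNReal.ofReal_toReal hfin]
    exact ENNReal.ofReal_lt_ofReal_iff (by positivity) |>.2 (lt_add_one _)
  exact absurd hle (not_le.2 hlt)
end

section
/- Define positive integers a_j, b_j by a₁ := 1, b_j := 2^{d_j} a_j, a_{j+1} := 2^j b_j, where (d_j)_{j≥1} is a strictly increasing sequence of positive integers with (2/A)^{d_j} ≤ 2^{-(j/2+1)} for a fixed real A > 2. Define quotients μ by μ_{a₁} := 2, μ_k := A^{i+1} μ_{a_j} for 2^i a_j < k ≤ 2^{i+1} a_j (0 ≤ i ≤ d_j−1), and μ_k := 2^{1/(2·2^i b_j)} μ_{k−1} for 2^i b_j < k ≤ 2^{i+1} b_j (0 ≤ i ≤ j−1). Then a_j/μ_{a_j} ≤ 2^{−j} for all j ≥ 1. -/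
open Filter

/-! Along one period `j → j + 1` the quotient changes by an explicit factor. On `(a_j, b_j]` the
value `μ_{b_j}` is `A^{d_j} μ_{a_j}`; on each of the `j` blocks `(2^i b_j, 2^{i+1} b_j]` there are
`2^i b_j` steps of ratio `2^{1/(2·2^i b_j)}`, a total factor `√2`. Hence
`a_{j+1}/μ_{a_{j+1}} = (2/A)^{d_j} · √2^j · a_j/μ_{a_j}`, and the growth condition on `d_j` turns
the bound `2^{-j}` into `2^{-(j+1)}`. -/

theorem eq_pow_mul_of_forall_lt_succ {M : Type*} [Monoid M] {u : ℕ → M} {c : M} {n : ℕ}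
    (h : ∀ i < n, u (i + 1) = c * u i) : u n = c ^ n * u 0 := by
  induction n with
  | zero => simp
  | succ n ih =>
    rw [h n n.lt_succ_self, ih fun i hi => h i (hi.trans n.lt_succ_self), pow_succ', mul_assoc]

theorem map_two_mul_eq_sqrt_two_mul {μ : ℕ → ℝ} {N : ℕ} (hN : 0 < N)
    (h : ∀ k, N < k → k ≤ 2 * N → μ k = (2 : ℝ) ^ ((1 : ℝ) / (2 * N)) * μ (k - 1)) :
    μ (2 * N) = √2 * μ N := by
  have hgeom := eq_pow_mul_of_forall_lt_succ (u := fun m => μ (N + m)) (n := N)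
    fun i hi => h (N + (i + 1)) (by omega) (by omega)
  have hroot : ((2 : ℝ) ^ ((1 : ℝ) / (2 * N))) ^ N = √2 := by
    rw [← Real.rpow_mul_natCast zero_le_two, Real.sqrt_eq_rpow]
    field_simp
  simp only [add_zero] at hgeom
  rw [two_mul, hgeom, hroot]

theorem map_two_pow_mul_eq_sqrt_two_pow_mul {μ : ℕ → ℝ} {b n : ℕ} (hb : 0 < b)
    (h : ∀ i < n, ∀ k, 2 ^ i * b < k → k ≤ 2 ^ (i + 1) * b →
      μ k = (2 : ℝ) ^ ((1 : ℝ) / (2 * 2 ^ i * (b : ℝ))) * μ (k - 1)) :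
    μ (2 ^ n * b) = √2 ^ n * μ b := by
  simpa using eq_pow_mul_of_forall_lt_succ (u := fun i => μ (2 ^ i * b)) (n := n) fun i hi => by
    have := map_two_mul_eq_sqrt_two_mul (μ := μ) (N := 2 ^ i * b) (by positivity) fun k hk hk' => by
      rw [h i hi k hk (by rw [pow_succ]; linarith)]
      push_cast; ring_nf
    simpa [pow_succ, mul_comm, mul_left_comm, mul_assoc] using this

theorem two_rpow_half_add_one (j : ℕ) : (2 : ℝ) ^ ((j : ℝ) / 2 + 1) = √2 ^ j * 2 := by
  rw [Real.rpow_add two_pos, Real.rpow_div_two_eq_sqrt _ zero_le_two, Real.rpow_natCast,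
    Real.rpow_one]

theorem quotient_le_one_div_two_pow_succ {A x m : ℝ} {d j : ℕ} (hA : 0 < A) (hx : 0 ≤ x)
    (hm : 0 < m) (hxm : x / m ≤ 1 / 2 ^ j) (hd : (2 / A) ^ d ≤ 1 / (2 : ℝ) ^ ((j : ℝ) / 2 + 1)) :
    (2 ^ j * (2 ^ d * x)) / (√2 ^ j * (A ^ d * m)) ≤ 1 / 2 ^ (j + 1) := by
  have hsq : (2 : ℝ) ^ j = √2 ^ j * √2 ^ j := by
    rw [← mul_pow, Real.mul_self_sqrt zero_le_two]
  rw [two_rpow_half_add_one] at hd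
  calc (2 ^ j * (2 ^ d * x)) / (√2 ^ j * (A ^ d * m)) = (2 / A) ^ d * (√2 ^ j * (x / m)) := by
        rw [hsq, div_pow]; field_simp
    _ ≤ 1 / (√2 ^ j * 2) * (√2 ^ j * (1 / 2 ^ j)) := by gcongr
    _ = 1 / 2 ^ (j + 1) := by field_simp; ring

theorem pos_of_div_pow_le_one_div_two_rpow {A : ℝ} {d j : ℕ}
    (h : (2 / A) ^ d ≤ 1 / (2 : ℝ) ^ ((j : ℝ) / 2 + 1)) : 0 < d := by
  refine Nat.pos_of_ne_zero fun hd => ?_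
  rw [hd, pow_zero, le_div_iff₀ (by positivity), one_mul] at h
  exact h.not_gt (Real.one_lt_rpow one_lt_two (by positivity))

theorem quotient_estimate_general
(A : ℝ) (hA : 2 < A)
    (a b d : ℕ → ℕ) (μ : ℕ → ℝ)
    (hdgrow : ∀ j ≥ 1, (2 / A) ^ (d j) ≤ 1 / (2 : ℝ) ^ ((j : ℝ) / 2 + 1))
    (ha1 : a 1 = 1)
    (hb : ∀ j ≥ 1, b j = 2 ^ (d j) * a j)
    (ha : ∀ j ≥ 1, a (j + 1) = 2 ^ j * b j)
    (hμa1 : μ (a 1) = 2)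
    (hblock1 : ∀ j ≥ 1, ∀ i < d j, ∀ k, 2 ^ i * a j < k → k ≤ 2 ^ (i + 1) * a j →
      μ k = A ^ (i + 1) * μ (a j))
    (hblock2 : ∀ j ≥ 1, ∀ i < j, ∀ k, 2 ^ i * b j < k → k ≤ 2 ^ (i + 1) * b j →
      μ k = (2 : ℝ) ^ ((1 : ℝ) / (2 * 2 ^ i * (b j : ℝ))) * μ (k - 1)) :
    ∀ j ≥ 1, (a j : ℝ) / μ (a j) ≤ 1 / 2 ^ j := by
  have hd_pos : ∀ j ≥ 1, 0 < d j := fun j hj => pos_of_div_pow_le_one_div_two_rpow (hdgrow j hj)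
  have ha_pos : ∀ j ≥ 1, 0 < a j :=
    Nat.le_induction (by rw [ha1]; exact one_pos) fun j hj ih => by
      rw [ha j hj, hb j hj]; exact Nat.mul_pos (by positivity) (Nat.mul_pos (by positivity) ih)
  have hμb : ∀ j ≥ 1, μ (b j) = A ^ d j * μ (a j) := fun j hj => by
    have hdj := hd_pos j hj
    have hlast := hblock1 j hj (d j - 1) (by omega) (b j)
    rw [Nat.sub_add_cancel hdj, ← hb j hj] at hlast
    refine hlast ?_ le_rfl
    rw [hb j hj]
    exact Nat.mul_lt_mul_of_pos_right (Nat.pow_lt_pow_right one_lt_two (by omega)) (ha_pos j hj)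
  have hμa : ∀ j ≥ 1, μ (a (j + 1)) = √2 ^ j * (A ^ d j * μ (a j)) := fun j hj => by
    have hb_pos : 0 < b j := by rw [hb j hj]; exact Nat.mul_pos (by positivity) (ha_pos j hj)
    rw [ha j hj, map_two_pow_mul_eq_sqrt_two_pow_mul hb_pos (hblock2 j hj), hμb j hj]
  suffices ∀ j ≥ 1, 0 < μ (a j) ∧ (a j : ℝ) / μ (a j) ≤ 1 / 2 ^ j from fun j hj => (this j hj).2
  refine Nat.le_induction (by rw [hμa1, ha1]; norm_num) fun j hj ⟨hpos, hle⟩ => ?_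
  have hA_pos : 0 < A := by linarith
  rw [hμa j hj, ha j hj, hb j hj]
  push_cast
  exact ⟨by positivity,
    quotient_le_one_div_two_pow_succ hA_pos (Nat.cast_nonneg _) hpos hle (hdgrow j hj)⟩

theorem quotient_estimate
(A : ℝ) (hA : 2 < A)
    (a b d : ℕ → ℕ) (μ : ℕ → ℝ)
    (hd : StrictMonoOn d (Set.Ici 1)) (hd1 : 1 ≤ d 1)
    (hdgrow : ∀ j ≥ 1, (2 / A) ^ (d j) ≤ 1 / (2 : ℝ) ^ ((j : ℝ) / 2 + 1))
    (ha1 : a 1 = 1)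
    (hb : ∀ j ≥ 1, b j = 2 ^ (d j) * a j)
    (ha : ∀ j ≥ 1, a (j + 1) = 2 ^ j * b j)
    (hμa1 : μ (a 1) = 2)
    (hblock1 : ∀ j ≥ 1, ∀ i < d j, ∀ k, 2 ^ i * a j < k → k ≤ 2 ^ (i + 1) * a j →
      μ k = A ^ (i + 1) * μ (a j))
    (hblock2 : ∀ j ≥ 1, ∀ i < j, ∀ k, 2 ^ i * b j < k → k ≤ 2 ^ (i + 1) * b j →
      μ k = (2 : ℝ) ^ ((1 : ℝ) / (2 * 2 ^ i * (b j : ℝ))) * μ (k - 1)) :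
    ∀ j ≥ 1, (a j : ℝ) / μ (a j) ≤ 1 / 2 ^ j :=
  quotient_estimate_general A hA a b d μ hdgrow ha1 hb ha hμa1 hblock1 hblock2
end

section
/- With the sequence μ constructed as follows — a₁ = 1, b_j = 2^{d_j}a_j, a_{j+1} = 2^j b_j with (2/A)^{d_j} ≤ 2^{-(j/2+1)} for fixed A > 2; μ_{a₁} = 2; μ constant equal to A^{i+1}μ_{a_j} on each block (2^i a_j, 2^{i+1}a_j]; and μ_k = 2^{1/(2·2^i b_j)} μ_{k−1} on each block (2^i b_j, 2^{i+1} b_j] — one has Σ_{k≥1} 1/μ_k < +∞ (non-quasianalyticity). -/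
/-!
Cut the series at the points `a j`. The invariant `2 ^ j * a j ≤ μ (a j)` propagates from `j` to
`j + 1`: on `(a j, b j]` the weight gains the factor `A ^ d j`, on `(b j, a (j + 1)]` exactly
`√2 ^ j`, while the index grows by `2 ^ (j + d j)`, and the growth condition on `d` is precisely
`2 * √2 ^ j * 2 ^ d j ≤ A ^ d j`. Given the invariant, the block `(a j, b j]` contributes a
geometric series of ratio `2 / A`, at most `2⁻ʲ / (A - 2)`, and on `(b j, a (j + 1)]`, where `μ`
is non-decreasing, the contribution is at most `a (j + 1) / μ (b j) ≤ (2 / A) ^ d j`.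
-/

open Filter

open Finset

theorem Finset.sum_Ico_eq_sum_range_sum_Ico {M : Type*} [AddCommMonoid M] (f : ℕ → M)
    {a : ℕ → ℕ} (ha : Monotone a) (n : ℕ) :
    ∑ k ∈ Ico (a 0) (a n), f k = ∑ i ∈ range n, ∑ k ∈ Ico (a i) (a (i + 1)), f k := by
  induction n with
  | zero => simp
  | succ n ih => rw [sum_range_succ, ← ih, sum_Ico_consecutive _ (ha n.zero_le) (ha n.le_succ)]

theorem exists_lt_mem_Ico_of_mem_Ico {a : ℕ → ℕ} {n k : ℕ} (hk : k ∈ Ico (a 0) (a n)) :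
    ∃ i < n, k ∈ Ico (a i) (a (i + 1)) := by
  obtain ⟨i, hik, hi, hki⟩ := by simpa using Ico_subset_biUnion_Ico n a (by simpa using hk)
  exact ⟨i, hi, mem_Ico.2 ⟨hik, hki⟩⟩

theorem summable_of_sum_Ico_le {f g : ℕ → ℝ} {a : ℕ → ℕ} (ha : Monotone a)
    (ha' : Tendsto a atTop atTop) (hf₀ : ∀ k < a 0, 0 ≤ f k)
    (hf : ∀ i, ∀ k ∈ Ico (a i) (a (i + 1)), 0 ≤ f k) (hg : Summable g)
    (hfg : ∀ i, ∑ k ∈ Ico (a i) (a (i + 1)), f k ≤ g i) : Summable f := by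
  have hf_nonneg : ∀ k, 0 ≤ f k := by
    intro k
    rcases lt_or_ge k (a 0) with hk | hk
    · exact hf₀ k hk
    obtain ⟨n, hn⟩ := (ha'.eventually_gt_atTop k).exists
    obtain ⟨i, -, hi⟩ := exists_lt_mem_Ico_of_mem_Ico (mem_Ico.2 ⟨hk, hn⟩)
    exact hf i k hi
  have hg_nonneg : ∀ i, 0 ≤ g i := fun i => (sum_nonneg (hf i)).trans (hfg i)
  refine summable_of_sum_range_le (c := ∑ k ∈ range (a 0), f k + ∑' i, g i) hf_nonneg fun n => ?_
  obtain ⟨m, hm⟩ := (ha'.eventually_ge_atTop n).exists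
  calc ∑ k ∈ range n, f k ≤ ∑ k ∈ range (a m), f k :=
        sum_le_sum_of_subset_of_nonneg (range_subset_range.2 hm) fun k _ _ => hf_nonneg k
    _ = ∑ k ∈ range (a 0), f k + ∑ i ∈ range m, ∑ k ∈ Ico (a i) (a (i + 1)), f k := by
        rw [← sum_Ico_eq_sum_range_sum_Ico f ha, sum_range_add_sum_Ico _ (ha m.zero_le)]
    _ ≤ _ := by
        gcongr
        exact (sum_le_sum fun i _ => hfg i).trans (hg.sum_le_tsum _ fun i _ => hg_nonneg i)

theorem pow_mul_of_forall_succ_eq_mul {M : Type*} [Monoid M] {g : ℕ → M} {c : M} {n : ℕ}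
    (h : ∀ i < n, g (i + 1) = c * g i) : g n = c ^ n * g 0 := by
  induction n with
  | zero => simp
  | succ n ih =>
    rw [h n n.lt_succ_self, ih fun i hi => h i (hi.trans n.lt_succ_self), pow_succ', mul_assoc]

theorem Real.rpow_one_div_two_mul_pow {x : ℝ} (hx : 0 ≤ x) {p : ℕ} (hp : p ≠ 0) :
    (x ^ (1 / (2 * (p : ℝ)))) ^ p = √x := by
  rw [← Real.rpow_natCast, ← Real.rpow_mul hx, Real.sqrt_eq_rpow]
  field_simp

theorem two_rpow_div_two_add_one (j : ℕ) : (2 : ℝ) ^ ((j : ℝ) / 2 + 1) = 2 * √2 ^ j := by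
  rw [Real.rpow_add two_pos, Real.rpow_one, mul_comm, Real.sqrt_eq_rpow, ← Real.rpow_natCast,
    ← Real.rpow_mul zero_le_two]
  ring_nf

theorem two_pow_succ_mul (i m : ℕ) : 2 ^ (i + 1) * m = 2 ^ i * m + 2 ^ i * m := by
  rw [pow_succ, mul_right_comm, mul_two]

theorem monotone_two_pow_mul (m : ℕ) : Monotone fun i => 2 ^ i * m :=
  fun _ _ hij => Nat.mul_le_mul_right m (Nat.pow_le_pow_right two_pos hij)

theorem exists_lt_mem_Ico_two_pow_mul {m n k : ℕ} (hk : k ∈ Ico m (2 ^ n * m)) :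
    ∃ i < n, 2 ^ i * m ≤ k ∧ k < 2 ^ (i + 1) * m := by
  simpa using exists_lt_mem_Ico_of_mem_Ico (a := fun i => 2 ^ i * m) (by simpa using hk)

def IsGeometricBlock (A : ℝ) (μ : ℕ → ℝ) (m n : ℕ) : Prop :=
  ∀ i < n, ∀ k, 2 ^ i * m < k → k ≤ 2 ^ (i + 1) * m → μ k = A ^ (i + 1) * μ m

/-- The factor `2 ^ (1 / (2 * 2 ^ i * m))` is applied `2 ^ i * m` times on the `i`-th dyadic
interval, so `μ` gains exactly `√2` there. -/
def IsSqrtTwoBlock (μ : ℕ → ℝ) (m n : ℕ) : Prop :=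
  ∀ i < n, ∀ k, 2 ^ i * m < k → k ≤ 2 ^ (i + 1) * m →
    μ k = (2 : ℝ) ^ ((1 : ℝ) / (2 * 2 ^ i * (m : ℝ))) * μ (k - 1)

variable {A : ℝ} {μ : ℕ → ℝ} {m n j : ℕ}

-- Sums run over `k ↦ 1 / μ (k + 1)`, so `Ico m M` collects the weights on `(m, M]`.

namespace IsGeometricBlock

theorem apply_two_pow_mul (h : IsGeometricBlock A μ m n) (hm : m ≠ 0) :
    μ (2 ^ n * m) = A ^ n * μ m := by
  cases n with
  | zero => simp
  | succ n =>
    refine h n n.lt_succ_self _ ?_ le_rfl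
    rw [two_pow_succ_mul]
    exact Nat.lt_add_of_pos_right (Nat.mul_pos (Nat.two_pow_pos n) (Nat.pos_of_ne_zero hm))

theorem apply_succ_pos (h : IsGeometricBlock A μ m n) (hA : 0 < A) (hμ : 0 < μ m) :
    ∀ k ∈ Ico m (2 ^ n * m), 0 < μ (k + 1) := by
  intro k hk
  obtain ⟨i, hi, hik, hki⟩ := exists_lt_mem_Ico_two_pow_mul hk
  rw [h i hi (k + 1) (by omega) hki]
  positivity

theorem sum_one_div_le (h : IsGeometricBlock A μ m n) (hA : 2 < A) (hμ : 0 < μ m) :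
    ∑ k ∈ Ico m (2 ^ n * m), 1 / μ (k + 1) ≤ m / ((A - 2) * μ m) := by
  have hA0 : 0 < A := by linarith
  have hdyadic := sum_Ico_eq_sum_range_sum_Ico (fun k => 1 / μ (k + 1)) (monotone_two_pow_mul m) n
  simp only [pow_zero, one_mul] at hdyadic
  calc ∑ k ∈ Ico m (2 ^ n * m), 1 / μ (k + 1)
      = ∑ i ∈ range n, m / (A * μ m) * (2 / A) ^ i := by
        rw [hdyadic]
        refine sum_congr rfl fun i hi => ?_
        have hconst : ∀ k ∈ Ico (2 ^ i * m) (2 ^ (i + 1) * m),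
            1 / μ (k + 1) = 1 / (A ^ (i + 1) * μ m) := fun k hk => by
          rw [h i (mem_range.1 hi) (k + 1) (Nat.lt_succ_of_le (mem_Ico.1 hk).1) (mem_Ico.1 hk).2]
        rw [sum_congr rfl hconst, sum_const, Nat.card_Ico, two_pow_succ_mul, Nat.add_sub_cancel,
          nsmul_eq_mul]
        push_cast
        rw [div_pow]
        field_simp
        ring
    _ ≤ m / (A * μ m) * (1 / (1 - 2 / A)) := by
        rw [← mul_sum]
        gcongr
        simpa using geom_sum_Ico_le_of_lt_one (m := 0) (n := n) (x := 2 / A) (by positivity)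
          ((div_lt_one hA0).2 hA)
    _ = m / ((A - 2) * μ m) := by
        field_simp

end IsGeometricBlock

namespace IsSqrtTwoBlock

theorem apply_two_pow_mul_add (h : IsSqrtTwoBlock μ m n) {i t : ℕ} (hi : i < n)
    (ht : t ≤ 2 ^ i * m) :
    μ (2 ^ i * m + t) = ((2 : ℝ) ^ ((1 : ℝ) / (2 * 2 ^ i * (m : ℝ)))) ^ t * μ (2 ^ i * m) :=
  pow_mul_of_forall_succ_eq_mul (g := fun s => μ (2 ^ i * m + s)) fun s hs =>
    h i hi _ (by omega) (by rw [two_pow_succ_mul]; omega)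

theorem apply_two_pow_mul (h : IsSqrtTwoBlock μ m n) (hm : m ≠ 0) {i : ℕ} (hi : i ≤ n) :
    μ (2 ^ i * m) = √2 ^ i * μ m := by
  have hstep : ∀ l < i, μ (2 ^ (l + 1) * m) = √2 * μ (2 ^ l * m) := by
    intro l hl
    have hcast : (2 : ℝ) * 2 ^ l * m = 2 * ((2 ^ l * m : ℕ) : ℝ) := by push_cast; ring
    rw [two_pow_succ_mul, h.apply_two_pow_mul_add (hl.trans_le hi) le_rfl, hcast,
      Real.rpow_one_div_two_mul_pow zero_le_two (mul_ne_zero (pow_ne_zero l two_ne_zero) hm)]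
  simpa using pow_mul_of_forall_succ_eq_mul (g := fun l => μ (2 ^ l * m)) hstep

theorem le_apply_succ (h : IsSqrtTwoBlock μ m n) (hm : m ≠ 0) (hμ : 0 ≤ μ m) :
    ∀ k ∈ Ico m (2 ^ n * m), μ m ≤ μ (k + 1) := by
  intro k hk
  obtain ⟨i, hi, hik, hki⟩ := exists_lt_mem_Ico_two_pow_mul hk
  obtain ⟨t, rfl⟩ := Nat.exists_eq_add_of_le hik
  have hμi := h.apply_two_pow_mul hm hi.le
  have hc : 1 ≤ (2 : ℝ) ^ ((1 : ℝ) / (2 * 2 ^ i * (m : ℝ))) :=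
    Real.one_le_rpow one_le_two (by positivity)
  calc μ m ≤ √2 ^ i * μ m := le_mul_of_one_le_left hμ (one_le_pow₀ Real.one_lt_sqrt_two.le)
    _ = μ (2 ^ i * m) := hμi.symm
    _ ≤ ((2 : ℝ) ^ ((1 : ℝ) / (2 * 2 ^ i * (m : ℝ)))) ^ (t + 1) * μ (2 ^ i * m) :=
        le_mul_of_one_le_left (hμi ▸ by positivity) (one_le_pow₀ hc)
    _ = μ (2 ^ i * m + t + 1) :=
        (h.apply_two_pow_mul_add hi (by rw [two_pow_succ_mul] at hki; omega)).symm

theorem sum_one_div_le (h : IsSqrtTwoBlock μ m n) (hm : m ≠ 0) (hμ : 0 < μ m) :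
    ∑ k ∈ Ico m (2 ^ n * m), 1 / μ (k + 1) ≤ 2 ^ n * m / μ m :=
  calc ∑ k ∈ Ico m (2 ^ n * m), 1 / μ (k + 1) ≤ #(Ico m (2 ^ n * m)) • (1 / μ m) :=
        sum_le_card_nsmul _ _ _ fun k hk =>
          one_div_le_one_div_of_le hμ (h.le_apply_succ hm hμ.le k hk)
    _ ≤ 2 ^ n * m / μ m := by
        rw [nsmul_eq_mul, Nat.card_Ico, mul_one_div]
        gcongr
        exact_mod_cast Nat.sub_le _ _

end IsSqrtTwoBlock

/-- Stage `j` of the construction, on `(a j, a (j + 1)]`, with `m = a j` and `n = d j`. -/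
structure IsStage (A : ℝ) (μ : ℕ → ℝ) (m n j : ℕ) : Prop where
  geometric : IsGeometricBlock A μ m n
  sqrtTwo : IsSqrtTwoBlock μ (2 ^ n * m) j

namespace IsStage

theorem apply_end (h : IsStage A μ m n j) (hm : m ≠ 0) :
    μ (2 ^ j * (2 ^ n * m)) = √2 ^ j * (A ^ n * μ m) := by
  rw [h.sqrtTwo.apply_two_pow_mul (mul_ne_zero (pow_ne_zero n two_ne_zero) hm) le_rfl,
    h.geometric.apply_two_pow_mul hm]

theorem two_pow_succ_mul_le_apply_end (h : IsStage A μ m n j) (hA : 0 < A) (hm : m ≠ 0)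
    (hgrow : (2 / A) ^ n ≤ 1 / (2 * √2 ^ j)) (hμ : 2 ^ j * (m : ℝ) ≤ μ m) :
    2 ^ (j + 1) * ((2 ^ j * (2 ^ n * m) : ℕ) : ℝ) ≤ μ (2 ^ j * (2 ^ n * m)) := by
  have hA' : 2 * √2 ^ j * 2 ^ n ≤ A ^ n := by
    rwa [div_pow, div_le_div_iff₀ (by positivity) (by positivity), one_mul, mul_comm] at hgrow
  have hsqrt : (2 : ℝ) ^ j = √2 ^ j * √2 ^ j := by rw [← mul_pow, Real.mul_self_sqrt zero_le_two]
  rw [h.apply_end hm]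
  push_cast
  calc 2 ^ (j + 1) * (2 ^ j * (2 ^ n * (m : ℝ)))
      = (2 * √2 ^ j * 2 ^ n) * (√2 ^ j * (2 ^ j * m)) := by
        linear_combination (2 * 2 ^ n * 2 ^ j * (m : ℝ)) * hsqrt
    _ ≤ A ^ n * (√2 ^ j * μ m) := by gcongr
    _ = √2 ^ j * (A ^ n * μ m) := by ring

theorem apply_succ_pos (h : IsStage A μ m n j) (hA : 0 < A) (hm : m ≠ 0) (hμ : 0 < μ m) :
    ∀ k ∈ Ico m (2 ^ j * (2 ^ n * m)), 0 < μ (k + 1) := by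
  intro k hk
  rcases lt_or_ge k (2 ^ n * m) with hkb | hbk
  · exact h.geometric.apply_succ_pos hA hμ k (mem_Ico.2 ⟨(mem_Ico.1 hk).1, hkb⟩)
  · have hμb : 0 < μ (2 ^ n * m) := by rw [h.geometric.apply_two_pow_mul hm]; positivity
    exact hμb.trans_le <| h.sqrtTwo.le_apply_succ (mul_ne_zero (pow_ne_zero n two_ne_zero) hm)
      hμb.le k (mem_Ico.2 ⟨hbk, (mem_Ico.1 hk).2⟩)

theorem sum_one_div_le (h : IsStage A μ m n j) (hA : 2 < A) (hm : m ≠ 0)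
    (hμ : 2 ^ j * (m : ℝ) ≤ μ m) :
    ∑ k ∈ Ico m (2 ^ j * (2 ^ n * m)), 1 / μ (k + 1) ≤ (1 / 2) ^ j / (A - 2) + (2 / A) ^ n := by
  have hμ₀ : 0 < μ m := lt_of_lt_of_le (by positivity) hμ
  have hμb : μ (2 ^ n * m) = A ^ n * μ m := h.geometric.apply_two_pow_mul hm
  have hratio : (m : ℝ) / μ m ≤ (1 / 2) ^ j := by
    rw [div_le_iff₀ hμ₀, one_div_pow, one_div_mul_eq_div, le_div_iff₀ (by positivity), mul_comm]
    exact hμ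
  rw [← sum_Ico_consecutive _ (Nat.le_mul_of_pos_left m (Nat.two_pow_pos n))
    (Nat.le_mul_of_pos_left _ (Nat.two_pow_pos j))]
  gcongr ?_ + ?_
  · calc _ ≤ m / ((A - 2) * μ m) := h.geometric.sum_one_div_le hA hμ₀
      _ = (m / μ m) / (A - 2) := by rw [mul_comm, div_mul_eq_div_div]
      _ ≤ (1 / 2) ^ j / (A - 2) := by gcongr
  · calc _ ≤ 2 ^ j * ((2 ^ n * m : ℕ) : ℝ) / μ (2 ^ n * m) :=
          h.sqrtTwo.sum_one_div_le (mul_ne_zero (pow_ne_zero n two_ne_zero) hm)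
            (by rw [hμb]; positivity)
      _ = (2 / A) ^ n * (2 ^ j * m / μ m) := by
          rw [hμb, div_pow]
          push_cast
          field_simp
      _ ≤ (2 / A) ^ n := mul_le_of_le_one_right (by positivity) ((div_le_one hμ₀).2 hμ)

end IsStage

section Construction

variable {a d : ℕ → ℕ}

theorem ne_zero_of_succ_eq_two_pow_mul (ha1 : a 1 = 1)
    (ha : ∀ j ≥ 1, a (j + 1) = 2 ^ j * (2 ^ d j * a j)) : ∀ j ≥ 1, a j ≠ 0 := by
  intro j hj
  induction j, hj using Nat.le_induction with
  | base => simp [ha1]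
  | succ j hj ih => simp [ha j hj, ih]

theorem strictMono_succ_of_succ_eq_two_pow_mul (ha1 : a 1 = 1)
    (ha : ∀ j ≥ 1, a (j + 1) = 2 ^ j * (2 ^ d j * a j)) : StrictMono fun j => a (j + 1) :=
  strictMono_nat_of_lt_succ fun j => by
    rw [ha (j + 1) j.succ_pos]
    calc a (j + 1) < 2 ^ (j + 1) * a (j + 1) :=
          lt_mul_left (Nat.pos_of_ne_zero (ne_zero_of_succ_eq_two_pow_mul ha1 ha _ j.succ_pos))
            (Nat.one_lt_two_pow j.succ_ne_zero)
      _ ≤ 2 ^ (j + 1) * (2 ^ d (j + 1) * a (j + 1)) :=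
          Nat.mul_le_mul_left _ (Nat.le_mul_of_pos_left _ (Nat.two_pow_pos _))

theorem two_pow_mul_le_of_isStage (hA : 0 < A) (ha1 : a 1 = 1)
    (ha : ∀ j ≥ 1, a (j + 1) = 2 ^ j * (2 ^ d j * a j)) (hμa1 : μ (a 1) = 2)
    (hstage : ∀ j ≥ 1, IsStage A μ (a j) (d j) j)
    (hgrow : ∀ j ≥ 1, (2 / A) ^ d j ≤ 1 / (2 * √2 ^ j)) :
    ∀ j ≥ 1, 2 ^ j * (a j : ℝ) ≤ μ (a j) := by
  intro j hj
  induction j, hj using Nat.le_induction with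
  | base => rw [hμa1, ha1]; norm_num
  | succ j hj ih =>
    rw [ha j hj]
    exact (hstage j hj).two_pow_succ_mul_le_apply_end hA
      (ne_zero_of_succ_eq_two_pow_mul ha1 ha j hj) (hgrow j hj) ih

theorem summable_of_isStage (hA : 2 < A) (ha1 : a 1 = 1)
    (ha : ∀ j ≥ 1, a (j + 1) = 2 ^ j * (2 ^ d j * a j)) (hμa1 : μ (a 1) = 2)
    (hstage : ∀ j ≥ 1, IsStage A μ (a j) (d j) j)
    (hgrow : ∀ j ≥ 1, (2 / A) ^ d j ≤ 1 / (2 * √2 ^ j)) :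
    Summable fun k => 1 / μ (k + 1) := by
  have hne := ne_zero_of_succ_eq_two_pow_mul ha1 ha
  have hμa := two_pow_mul_le_of_isStage (by linarith) ha1 ha hμa1 hstage hgrow
  have hmono := strictMono_succ_of_succ_eq_two_pow_mul ha1 ha
  have hg : Summable fun j : ℕ => (1 / 2 : ℝ) ^ j / (A - 2) + 1 / 2 * (√2)⁻¹ ^ j :=
    (summable_geometric_two.div_const _).add <| (summable_geometric_of_lt_one (by positivity)
      (inv_lt_one_of_one_lt₀ Real.one_lt_sqrt_two)).mul_left _
  refine summable_of_sum_Ico_le hmono.monotone hmono.tendsto_atTop ?_ ?_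
    ((summable_nat_add_iff 1).2 hg) ?_
  · intro k hk
    obtain rfl : k = 0 := by simpa [ha1] using hk
    rw [zero_add, ← ha1, hμa1]
    norm_num
  · intro j k hk
    rw [ha (j + 1) j.succ_pos] at hk
    have hm := hne (j + 1) j.succ_pos
    exact (one_div_pos.2 <| (hstage _ j.succ_pos).apply_succ_pos (by linarith) hm
      ((by positivity : (0 : ℝ) < _).trans_le (hμa _ j.succ_pos)) k hk).le
  · intro j
    rw [ha (j + 1) j.succ_pos]
    refine ((hstage _ j.succ_pos).sum_one_div_le hA (hne _ j.succ_pos)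
      (hμa _ j.succ_pos)).trans ?_
    rw [inv_pow, ← one_div, one_div_mul_one_div]
    gcongr
    exact hgrow (j + 1) j.succ_pos

end Construction

theorem mu_nonquasianalytic_general
(A : ℝ) (hA : 2 < A)
    (a b d : ℕ → ℕ) (μ : ℕ → ℝ)
    (hdgrow : ∀ j ≥ 1, (2 / A) ^ (d j) ≤ 1 / (2 : ℝ) ^ ((j : ℝ) / 2 + 1))
    (ha1 : a 1 = 1)
    (hb : ∀ j ≥ 1, b j = 2 ^ (d j) * a j)
    (ha : ∀ j ≥ 1, a (j + 1) = 2 ^ j * b j)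
    (hμa1 : μ (a 1) = 2)
    (hblock1 : ∀ j ≥ 1, ∀ i < d j, ∀ k, 2 ^ i * a j < k → k ≤ 2 ^ (i + 1) * a j →
      μ k = A ^ (i + 1) * μ (a j))
    (hblock2 : ∀ j ≥ 1, ∀ i < j, ∀ k, 2 ^ i * b j < k → k ≤ 2 ^ (i + 1) * b j →
      μ k = (2 : ℝ) ^ ((1 : ℝ) / (2 * 2 ^ i * (b j : ℝ))) * μ (k - 1)) :
    Summable (fun k : ℕ => 1 / μ (k + 1)) :=
  summable_of_isStage hA ha1 (fun j hj => by rw [ha j hj, hb j hj]) hμa1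
    (fun j hj => ⟨hblock1 j hj, hb j hj ▸ hblock2 j hj⟩)
    fun j hj => two_rpow_div_two_add_one j ▸ hdgrow j hj

theorem mu_nonquasianalytic
(A : ℝ) (hA : 2 < A)
    (a b d : ℕ → ℕ) (μ : ℕ → ℝ)
    (hd : StrictMonoOn d (Set.Ici 1)) (hd1 : 1 ≤ d 1)
    (hdgrow : ∀ j ≥ 1, (2 / A) ^ (d j) ≤ 1 / (2 : ℝ) ^ ((j : ℝ) / 2 + 1))
    (ha1 : a 1 = 1)
    (hb : ∀ j ≥ 1, b j = 2 ^ (d j) * a j)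
    (ha : ∀ j ≥ 1, a (j + 1) = 2 ^ j * b j)
    (hμa1 : μ (a 1) = 2)
    (hblock1 : ∀ j ≥ 1, ∀ i < d j, ∀ k, 2 ^ i * a j < k → k ≤ 2 ^ (i + 1) * a j →
      μ k = A ^ (i + 1) * μ (a j))
    (hblock2 : ∀ j ≥ 1, ∀ i < j, ∀ k, 2 ^ i * b j < k → k ≤ 2 ^ (i + 1) * b j →
      μ k = (2 : ℝ) ^ ((1 : ℝ) / (2 * 2 ^ i * (b j : ℝ))) * μ (k - 1)) :
    Summable (fun k : ℕ => 1 / μ (k + 1)) :=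
  mu_nonquasianalytic_general A hA a b d μ hdgrow ha1 hb ha hμa1 hblock1 hblock2
end

section
/- For the sequence μ constructed in the paper (blocks where μ is multiplied by A > 2 on dyadic blocks (2^i a_j, 2^{i+1} a_j], and satisfies μ_k = 2^{1/(2·2^i b_j)} μ_{k−1} on dyadic blocks (2^i b_j, 2^{i+1} b_j]), one has sup_{k≥1} μ_{2k}/μ_k ≤ √2·A; consequently the sequence M with M_j = Π_{k≤j} μ_k has moderate growth. -/
open Filter

/-!
On a block `(2^i a_j, 2^(i+1) a_j]` the sequence `μ` is constant, equal to `A^(i+1) μ(a_j)`; on a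
block `(2^i b_j, 2^(i+1) b_j]` it grows geometrically over `2^i b_j` steps of ratio
`2^(1/(2^(i+1) b_j))`, i.e. by a factor `√2` per block. Hence `μ` is increasing, and doubling `k`
moves it exactly one block further: `μ(2k)/μ(k)` is `A` inside the `a`-blocks, `√2` inside the
`b`-blocks, and at most `√2 A` across the block boundaries `a_j` and `b_j`.

For `M_n = ∏_{i ≤ n} μ_i`, the doubling bound `μ(2k) ≤ B μ(k)` gives `M_{2n} ≤ B^(2n) M_n²`,
while monotonicity of `μ` gives `M_{j+k}² ≤ M_{2j} M_{2k}`; together `M_{j+k} ≤ B^(j+k) M_j M_k`.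
-/

open Finset

section ModerateGrowth

variable {μ : ℕ → ℝ}

lemma prod_range_two_mul_succ_le {B : ℝ} (hμ : Monotone μ) (hμ0 : 1 ≤ μ 0)
    (hB : ∀ k, μ (2 * k) ≤ B * μ k) (n : ℕ) :
    ∏ i ∈ range (2 * n + 1), μ i ≤ B ^ (2 * n) * (∏ i ∈ range (n + 1), μ i) ^ 2 := by
  have hpos : ∀ k, 0 ≤ μ k := fun k => zero_le_one.trans (hμ0.trans (hμ k.zero_le))
  induction n with
  | zero => simpa [sq] using le_mul_of_one_le_left (hpos 0) hμ0
  | succ n ih =>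
    have h₂ : μ (2 * n + 2) ≤ B * μ (n + 1) := hB (n + 1)
    have h₁ : μ (2 * n + 1) ≤ B * μ (n + 1) := (hμ (by omega)).trans h₂
    calc ∏ i ∈ range (2 * (n + 1) + 1), μ i
        = (∏ i ∈ range (2 * n + 1), μ i) * (μ (2 * n + 1) * μ (2 * n + 2)) := by
          rw [show 2 * (n + 1) + 1 = 2 * n + 1 + 1 + 1 by ring, prod_range_succ,
            prod_range_succ, mul_assoc]
      _ ≤ (B ^ (2 * n) * (∏ i ∈ range (n + 1), μ i) ^ 2) * ((B * μ (n + 1)) * (B * μ (n + 1))) :=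
          mul_le_mul ih (mul_le_mul h₁ h₂ (hpos _) ((hpos _).trans h₁))
            (mul_nonneg (hpos _) (hpos _)) ((prod_nonneg fun i _ => hpos i).trans ih)
      _ = B ^ (2 * (n + 1)) * (∏ i ∈ range (n + 1 + 1), μ i) ^ 2 := by
          rw [prod_range_succ _ (n + 1)]; ring

lemma sq_prod_range_add_succ_le (hμ : Monotone μ) (hμ0 : 0 ≤ μ 0) (j k : ℕ) :
    (∏ i ∈ range (j + k + 1), μ i) ^ 2 ≤
      (∏ i ∈ range (2 * j + 1), μ i) * ∏ i ∈ range (2 * k + 1), μ i := by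
  have hpos : ∀ k, 0 ≤ μ k := fun k => hμ0.trans (hμ k.zero_le)
  wlog hjk : j ≤ k generalizing j k
  · rw [add_comm j, mul_comm]; exact this k j (by omega)
  obtain ⟨t, rfl⟩ := Nat.exists_eq_add_of_le hjk
  rw [show j + (j + t) = 2 * j + t by ring, show 2 * (j + t) = 2 * j + 2 * t by ring]
  clear hjk
  induction t with
  | zero => rw [sq, add_zero, mul_zero, add_zero]
  | succ t ih =>
    calc (∏ i ∈ range (2 * j + (t + 1) + 1), μ i) ^ 2
        = (∏ i ∈ range (2 * j + t + 1), μ i) ^ 2 * (μ (2 * j + t + 1) * μ (2 * j + t + 1)) := by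
          rw [← add_assoc, prod_range_succ]; ring
      _ ≤ ((∏ i ∈ range (2 * j + 1), μ i) * ∏ i ∈ range (2 * j + 2 * t + 1), μ i) *
            (μ (2 * j + 2 * t + 1) * μ (2 * j + 2 * t + 2)) :=
          mul_le_mul ih (mul_le_mul (hμ (by omega)) (hμ (by omega)) (hpos _) (hpos _))
            (mul_nonneg (hpos _) (hpos _)) ((sq_nonneg _).trans ih)
      _ = _ := by
          rw [show 2 * j + 2 * (t + 1) + 1 = 2 * j + 2 * t + 1 + 1 + 1 by ring,
            prod_range_succ _ (2 * j + 2 * t + 1 + 1), prod_range_succ _ (2 * j + 2 * t + 1)]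
          ring

lemma prod_range_add_succ_le {B : ℝ} (hμ : Monotone μ) (hμ0 : 1 ≤ μ 0)
    (hB : ∀ k, μ (2 * k) ≤ B * μ k) (j k : ℕ) :
    ∏ i ∈ range (j + k + 1), μ i ≤
      B ^ (j + k) * (∏ i ∈ range (j + 1), μ i) * ∏ i ∈ range (k + 1), μ i := by
  have hpos : ∀ k, 0 ≤ μ k := fun k => zero_le_one.trans (hμ0.trans (hμ k.zero_le))
  have hB0 : 0 ≤ B := nonneg_of_mul_nonneg_left ((hpos 0).trans (by simpa using hB 0))
    (zero_lt_one.trans_le hμ0)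
  refine (pow_le_pow_iff_left₀ (prod_nonneg fun i _ => hpos i) ?_ two_ne_zero).1 ?_
  · have := prod_nonneg fun i (_ : i ∈ range (j + 1)) => hpos i
    have := prod_nonneg fun i (_ : i ∈ range (k + 1)) => hpos i
    positivity
  calc (∏ i ∈ range (j + k + 1), μ i) ^ 2
      ≤ (∏ i ∈ range (2 * j + 1), μ i) * ∏ i ∈ range (2 * k + 1), μ i :=
        sq_prod_range_add_succ_le hμ (hpos 0) j k
    _ ≤ (B ^ (2 * j) * (∏ i ∈ range (j + 1), μ i) ^ 2) *
          (B ^ (2 * k) * (∏ i ∈ range (k + 1), μ i) ^ 2) :=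
        mul_le_mul (prod_range_two_mul_succ_le hμ hμ0 hB j)
          (prod_range_two_mul_succ_le hμ hμ0 hB k) (prod_nonneg fun i _ => hpos i)
          (by positivity)
    _ = _ := by ring

end ModerateGrowth

lemma exists_pow_mul_lt_and_le {c k : ℕ} (m : ℕ) (h₁ : c < k) (h₂ : k ≤ 2 ^ m * c) :
    ∃ i < m, 2 ^ i * c < k ∧ k ≤ 2 ^ (i + 1) * c := by
  induction m with
  | zero => omega
  | succ m ih =>
    by_cases hk : k ≤ 2 ^ m * c
    · obtain ⟨i, hi, hik⟩ := ih hk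
      exact ⟨i, by omega, hik⟩
    · exact ⟨m, by omega, by omega, h₂⟩

lemma exists_lt_and_le_succ {f : ℕ → ℕ} (hf : ∀ j ≥ 1, f j < f (j + 1)) {k : ℕ}
    (hk : f 1 < k) : ∃ j ≥ 1, f j < k ∧ k ≤ f (j + 1) := by
  induction k, hk using Nat.le_induction with
  | base => exact ⟨1, le_rfl, by omega, hf 1 le_rfl⟩
  | succ k hk ih =>
    obtain ⟨j, hj, hjk, hkj⟩ := ih
    rcases hkj.lt_or_eq with hlt | rfl
    · exact ⟨j, hj, by omega, hlt⟩
    · exact ⟨j + 1, by omega, by omega, hf (j + 1) (by omega)⟩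

lemma eq_pow_mul_of_eq_mul_pred {μ : ℕ → ℝ} {c : ℝ} {m N n : ℕ}
    (h : ∀ k, m < k → k ≤ m + N → μ k = c * μ (k - 1)) (hn : n ≤ N) :
    μ (m + n) = c ^ n * μ m := by
  induction n with
  | zero => simp
  | succ n ih =>
    rw [← add_assoc, h _ (by omega) (by omega), Nat.add_sub_cancel, ih (by omega)]
    ring

noncomputable def blockRatio (i b : ℕ) : ℝ := (2 : ℝ) ^ ((1 : ℝ) / (2 * 2 ^ i * (b : ℝ)))

lemma one_le_blockRatio (i b : ℕ) : 1 ≤ blockRatio i b :=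
  Real.one_le_rpow one_le_two (by positivity)

lemma blockRatio_succ_sq (i b : ℕ) : blockRatio (i + 1) b ^ 2 = blockRatio i b := by
  rw [blockRatio, blockRatio, ← Real.rpow_natCast, ← Real.rpow_mul zero_le_two]
  congr 1
  push_cast
  ring

lemma blockRatio_pow {b : ℕ} (hb : b ≠ 0) (i : ℕ) : blockRatio i b ^ (2 ^ i * b) = √2 := by
  rw [blockRatio, ← Real.rpow_natCast, ← Real.rpow_mul zero_le_two, Real.sqrt_eq_rpow]
  congr 1
  push_cast
  field_simp

structure IsBlockSeq (A : ℝ) (a b d : ℕ → ℕ) (μ : ℕ → ℝ) : Prop where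
  one_le_A : 1 ≤ A
  one_le_d : ∀ j ≥ 1, 1 ≤ d j
  a_one : a 1 = 1
  b_eq : ∀ j ≥ 1, b j = 2 ^ d j * a j
  a_succ : ∀ j ≥ 1, a (j + 1) = 2 ^ j * b j
  mu_zero : μ 0 = 1
  mu_a_one : μ (a 1) = 2
  block_a : ∀ j ≥ 1, ∀ i < d j, ∀ k, 2 ^ i * a j < k → k ≤ 2 ^ (i + 1) * a j →
    μ k = A ^ (i + 1) * μ (a j)
  block_b : ∀ j ≥ 1, ∀ i < j, ∀ k, 2 ^ i * b j < k → k ≤ 2 ^ (i + 1) * b j →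
    μ k = blockRatio i (b j) * μ (k - 1)

namespace IsBlockSeq

variable {A : ℝ} {a b d : ℕ → ℕ} {μ : ℕ → ℝ} {i j k : ℕ}

lemma a_pos (h : IsBlockSeq A a b d μ) (hj : 1 ≤ j) : 0 < a j := by
  induction j, hj using Nat.le_induction with
  | base => simp [h.a_one]
  | succ j hj ih => rw [h.a_succ j hj, h.b_eq j hj]; positivity

lemma b_pos (h : IsBlockSeq A a b d μ) (hj : 1 ≤ j) : 0 < b j := by
  rw [h.b_eq j hj]; exact Nat.mul_pos (Nat.two_pow_pos _) (h.a_pos hj)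

lemma a_lt_a_succ (h : IsBlockSeq A a b d μ) (hj : 1 ≤ j) : a j < a (j + 1) := by
  have : 2 ≤ 2 ^ j * 2 ^ d j := le_mul_of_le_of_one_le (Nat.le_self_pow (by omega) 2)
    Nat.one_le_two_pow
  rw [h.a_succ j hj, h.b_eq j hj, ← mul_assoc]
  nlinarith [h.a_pos hj]

lemma mem_block (h : IsBlockSeq A a b d μ) (hk : 2 ≤ k) :
    (∃ j ≥ 1, ∃ i < d j, 2 ^ i * a j < k ∧ k ≤ 2 ^ (i + 1) * a j) ∨
      (∃ j ≥ 1, ∃ i < j, 2 ^ i * b j < k ∧ k ≤ 2 ^ (i + 1) * b j) := by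
  obtain ⟨j, hj, hak, hka⟩ :=
    exists_lt_and_le_succ (f := a) (fun j hj => h.a_lt_a_succ hj) (by rw [h.a_one]; omega : a 1 < k)
  by_cases hkb : k ≤ b j
  · exact .inl ⟨j, hj, exists_pow_mul_lt_and_le _ hak (h.b_eq j hj ▸ hkb)⟩
  · exact .inr ⟨j, hj, exists_pow_mul_lt_and_le _ (by omega) (h.a_succ j hj ▸ hka)⟩

lemma mu_pow_mul_a (h : IsBlockSeq A a b d μ) (hj : 1 ≤ j) (hi : i ≤ d j) :
    μ (2 ^ i * a j) = A ^ i * μ (a j) := by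
  cases i with
  | zero => simp
  | succ i =>
    have : 2 ^ i * a j < 2 ^ (i + 1) * a j := by
      rw [pow_succ]; nlinarith [h.a_pos hj, Nat.two_pow_pos i]
    exact h.block_a j hj i hi _ this le_rfl

lemma mu_b (h : IsBlockSeq A a b d μ) (hj : 1 ≤ j) : μ (b j) = A ^ d j * μ (a j) := by
  rw [h.b_eq j hj, h.mu_pow_mul_a hj le_rfl]

lemma mu_pow_mul_b_add (h : IsBlockSeq A a b d μ) (hj : 1 ≤ j) (hi : i < j) {n : ℕ}
    (hn : n ≤ 2 ^ i * b j) :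
    μ (2 ^ i * b j + n) = blockRatio i (b j) ^ n * μ (2 ^ i * b j) :=
  eq_pow_mul_of_eq_mul_pred
    (fun k hk₁ hk₂ => h.block_b j hj i hi k hk₁ (by rw [pow_succ]; linarith)) hn

lemma mu_pow_mul_b (h : IsBlockSeq A a b d μ) (hj : 1 ≤ j) (hi : i ≤ j) :
    μ (2 ^ i * b j) = √2 ^ i * μ (b j) := by
  induction i with
  | zero => simp
  | succ i ih =>
    rw [show 2 ^ (i + 1) * b j = 2 ^ i * b j + 2 ^ i * b j by ring,
      h.mu_pow_mul_b_add hj (by omega) le_rfl, blockRatio_pow (h.b_pos hj).ne', ih (by omega),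
      pow_succ]
    ring

lemma mu_le_mu_succ (h : IsBlockSeq A a b d μ) (hμ : ∀ m ≤ k, 0 ≤ μ m) : μ k ≤ μ (k + 1) := by
  rcases Nat.eq_zero_or_pos k with rfl | hk
  · rw [zero_add, h.mu_zero, show μ 1 = 2 by simpa [h.a_one] using h.mu_a_one]; norm_num
  rcases h.mem_block (by omega : 2 ≤ k + 1) with ⟨j, hj, i, hi, hk₁, hk₂⟩ | ⟨j, hj, i, hi, hk₁, hk₂⟩
  · rw [h.block_a j hj i hi _ hk₁ hk₂]
    rcases (Nat.lt_succ_iff.1 hk₁).lt_or_eq with hlt | heq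
    · rw [h.block_a j hj i hi k hlt (by omega)]
    · have hμa : 0 ≤ μ (a j) :=
        hμ _ (by rw [← heq]; exact Nat.le_mul_of_pos_left _ (Nat.two_pow_pos i))
      rw [← heq, h.mu_pow_mul_a hj hi.le, pow_succ, mul_assoc]
      exact mul_le_mul_of_nonneg_left (le_mul_of_one_le_left hμa h.one_le_A)
        (pow_nonneg (zero_le_one.trans h.one_le_A) _)
  · rw [h.block_b j hj i hi _ hk₁ hk₂, Nat.add_sub_cancel]
    exact le_mul_of_one_le_left (hμ k le_rfl) (one_le_blockRatio _ _)

lemma one_le_mu (h : IsBlockSeq A a b d μ) (k : ℕ) : 1 ≤ μ k := by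
  suffices ∀ m ≤ k, 1 ≤ μ m from this k le_rfl
  induction k with
  | zero => intro m hm; rw [Nat.le_zero.1 hm, h.mu_zero]
  | succ k ih =>
    intro m hm
    rcases hm.lt_or_eq with hm | rfl
    · exact ih m (by omega)
    · exact (ih k le_rfl).trans (h.mu_le_mu_succ fun m hm => zero_le_one.trans (ih m hm))

lemma monotone (h : IsBlockSeq A a b d μ) : Monotone μ :=
  monotone_nat_of_le_succ fun _ => h.mu_le_mu_succ fun m _ => zero_le_one.trans (h.one_le_mu m)

lemma mu_a_le_sqrt_two_mul (h : IsBlockSeq A a b d μ) (hj : 2 ≤ j) (hk : a j ≤ 2 * k) :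
    μ (a j) ≤ √2 * μ k := by
  obtain ⟨q, rfl⟩ : ∃ q, j = q + 1 + 1 := ⟨j - 2, by omega⟩
  have hq : 1 ≤ q + 1 := by omega
  have ha : a (q + 1 + 1) = 2 * (2 ^ q * b (q + 1)) := by rw [h.a_succ _ hq, pow_succ]; ring
  calc μ (a (q + 1 + 1)) = √2 * μ (2 ^ q * b (q + 1)) := by
        rw [h.a_succ _ hq, h.mu_pow_mul_b hq le_rfl, h.mu_pow_mul_b hq (by omega), pow_succ]
        ring
    _ ≤ √2 * μ k := mul_le_mul_of_nonneg_left (h.monotone (by omega)) (Real.sqrt_nonneg 2)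

lemma mu_two_mul_le_of_block_a (h : IsBlockSeq A a b d μ) (hj : 1 ≤ j) (hi : i < d j)
    (h₁ : 2 ^ i * a j < 2 * k) (h₂ : 2 * k ≤ 2 ^ (i + 1) * a j) :
    μ (2 * k) ≤ √2 * A * μ k := by
  have hA : 0 ≤ A := zero_le_one.trans h.one_le_A
  have hμk : 0 ≤ μ k := zero_le_one.trans (h.one_le_mu k)
  rw [h.block_a j hj i hi _ h₁ h₂]
  cases i with
  | succ t =>
    have hk : μ k = A ^ (t + 1) * μ (a j) := by
      rw [pow_succ] at h₁ h₂
      exact h.block_a j hj t (by omega) k (by linarith) (by linarith)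
    calc A ^ (t + 1 + 1) * μ (a j) = A * μ k := by rw [hk]; ring
      _ ≤ √2 * A * μ k := by nlinarith [Real.one_lt_sqrt_two, mul_nonneg hA hμk]
  | zero =>
    simp only [zero_add, pow_zero, pow_one, one_mul] at h₁ h₂ ⊢
    have hμa : μ (a j) ≤ √2 * μ k := by
      rcases (show k ≤ a j by omega).lt_or_eq with hlt | rfl
      · have hj2 : 2 ≤ j := by
          by_contra
          obtain rfl : j = 1 := by omega
          rw [h.a_one] at hlt h₁; omega
        exact h.mu_a_le_sqrt_two_mul hj2 h₁.le
      · exact le_mul_of_one_le_left hμk Real.one_lt_sqrt_two.le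
    calc A * μ (a j) ≤ A * (√2 * μ k) := mul_le_mul_of_nonneg_left hμa hA
      _ = √2 * A * μ k := by ring

lemma mu_two_mul_le_of_block_b (h : IsBlockSeq A a b d μ) (hj : 1 ≤ j) (hi : i < j)
    (h₁ : 2 ^ i * b j < 2 * k) (h₂ : 2 * k ≤ 2 ^ (i + 1) * b j) :
    μ (2 * k) ≤ √2 * μ k := by
  cases i with
  | succ t =>
    have e₁ : 2 ^ (t + 1) * b j = 2 * (2 ^ t * b j) := by ring
    have e₂ : 2 ^ (t + 1 + 1) * b j = 2 * (2 ^ (t + 1) * b j) := by ring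
    obtain ⟨m, rfl⟩ : ∃ m, k = 2 ^ t * b j + m := ⟨k - 2 ^ t * b j, by omega⟩
    have hm : m ≤ 2 ^ t * b j := by omega
    have h2k : 2 * (2 ^ t * b j + m) = 2 ^ (t + 1) * b j + 2 * m := by ring
    rw [h2k, h.mu_pow_mul_b_add hj hi (by omega),
      h.mu_pow_mul_b_add hj (by omega) hm, h.mu_pow_mul_b hj hi.le,
      h.mu_pow_mul_b hj (by omega), pow_mul, blockRatio_succ_sq, pow_succ]
    exact le_of_eq (by ring)
  | zero =>
    simp only [zero_add, pow_zero, pow_one, one_mul] at h₁ h₂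
    obtain ⟨s, hs⟩ : ∃ s, d j = s + 1 := ⟨d j - 1, by have := h.one_le_d j hj; omega⟩
    have hb : b j = 2 * (2 ^ s * a j) := by rw [h.b_eq j hj, hs, pow_succ]; ring
    have hμk : μ k = μ (b j) := by
      rw [h.block_a j hj s (by omega) k (by omega) (by rw [pow_succ]; linarith), h.mu_b hj, hs]
    calc μ (2 * k) ≤ μ (2 ^ 1 * b j) := h.monotone (by omega)
      _ = √2 * μ k := by rw [h.mu_pow_mul_b hj hj, pow_one, hμk]

lemma mu_two_mul_le (h : IsBlockSeq A a b d μ) (k : ℕ) : μ (2 * k) ≤ √2 * A * μ k := by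
  have hμk : 0 ≤ μ k := zero_le_one.trans (h.one_le_mu k)
  have hsqrt2A : 1 ≤ √2 * A := one_le_mul_of_one_le_of_one_le Real.one_lt_sqrt_two.le h.one_le_A
  rcases Nat.eq_zero_or_pos k with rfl | hk
  · simpa using le_mul_of_one_le_left hμk hsqrt2A
  rcases h.mem_block (by omega : 2 ≤ 2 * k) with ⟨j, hj, i, hi, h₁, h₂⟩ | ⟨j, hj, i, hi, h₁, h₂⟩
  · exact h.mu_two_mul_le_of_block_a hj hi h₁ h₂
  · calc μ (2 * k) ≤ √2 * μ k := h.mu_two_mul_le_of_block_b hj hi h₁ h₂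
      _ ≤ √2 * A * μ k := by
        rw [mul_assoc]
        exact mul_le_mul_of_nonneg_left (le_mul_of_one_le_left hμk h.one_le_A) (Real.sqrt_nonneg 2)

end IsBlockSeq

theorem mu_moderate_growth_general
(A : ℝ) (hA : 2 < A)
    (a b d : ℕ → ℕ) (μ : ℕ → ℝ)
    (hd : StrictMonoOn d (Set.Ici 1)) (hd1 : 1 ≤ d 1)
    (ha1 : a 1 = 1)
    (hb : ∀ j ≥ 1, b j = 2 ^ (d j) * a j)
    (ha : ∀ j ≥ 1, a (j + 1) = 2 ^ j * b j)
    (hμa1 : μ (a 1) = 2)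
    (hblock1 : ∀ j ≥ 1, ∀ i < d j, ∀ k, 2 ^ i * a j < k → k ≤ 2 ^ (i + 1) * a j →
      μ k = A ^ (i + 1) * μ (a j))
    (hblock2 : ∀ j ≥ 1, ∀ i < j, ∀ k, 2 ^ i * b j < k → k ≤ 2 ^ (i + 1) * b j →
      μ k = (2 : ℝ) ^ ((1 : ℝ) / (2 * 2 ^ i * (b j : ℝ))) * μ (k - 1))
    (hμ0 : μ 0 = 1) :
    (∀ k ≥ 1, μ (2 * k) / μ k ≤ Real.sqrt 2 * A) ∧
    (∃ C ≥ (1 : ℝ), ∀ j k : ℕ,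
      (∏ i ∈ Finset.range (j + k + 1), μ i) ≤
        C ^ (j + k + 1) * (∏ i ∈ Finset.range (j + 1), μ i) *
          (∏ i ∈ Finset.range (k + 1), μ i)) := by
  have h : IsBlockSeq A a b d μ :=
    { one_le_A := by linarith
      one_le_d := fun j hj =>
        hd1.trans (hd.monotoneOn (Set.mem_Ici.2 le_rfl) (Set.mem_Ici.2 hj) hj)
      a_one := ha1
      b_eq := hb
      a_succ := ha
      mu_zero := hμ0
      mu_a_one := hμa1
      block_a := hblock1
      block_b := hblock2 }
  have hμ : ∀ i, 0 ≤ μ i := fun i => zero_le_one.trans (h.one_le_mu i)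
  have hB : 1 ≤ √2 * A := one_le_mul_of_one_le_of_one_le Real.one_lt_sqrt_two.le h.one_le_A
  refine ⟨fun k _ => (div_le_iff₀ (zero_lt_one.trans_le (h.one_le_mu k))).2 (h.mu_two_mul_le k),
    √2 * A, hB, fun j k => ?_⟩
  have hMj := prod_nonneg fun i (_ : i ∈ range (j + 1)) => hμ i
  have hMk := prod_nonneg fun i (_ : i ∈ range (k + 1)) => hμ i
  calc ∏ i ∈ range (j + k + 1), μ i
      ≤ (√2 * A) ^ (j + k) * (∏ i ∈ range (j + 1), μ i) * ∏ i ∈ range (k + 1), μ i :=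
        prod_range_add_succ_le h.monotone (h.one_le_mu 0) h.mu_two_mul_le j k
    _ ≤ _ := mul_le_mul_of_nonneg_right
        (mul_le_mul_of_nonneg_right (pow_le_pow_right₀ hB (Nat.le_succ _)) hMj) hMk

theorem mu_moderate_growth
(A : ℝ) (hA : 2 < A)
    (a b d : ℕ → ℕ) (μ : ℕ → ℝ)
    (hd : StrictMonoOn d (Set.Ici 1)) (hd1 : 1 ≤ d 1)
    (hdgrow : ∀ j ≥ 1, (2 / A) ^ (d j) ≤ 1 / (2 : ℝ) ^ ((j : ℝ) / 2 + 1))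
    (ha1 : a 1 = 1)
    (hb : ∀ j ≥ 1, b j = 2 ^ (d j) * a j)
    (ha : ∀ j ≥ 1, a (j + 1) = 2 ^ j * b j)
    (hμa1 : μ (a 1) = 2)
    (hblock1 : ∀ j ≥ 1, ∀ i < d j, ∀ k, 2 ^ i * a j < k → k ≤ 2 ^ (i + 1) * a j →
      μ k = A ^ (i + 1) * μ (a j))
    (hblock2 : ∀ j ≥ 1, ∀ i < j, ∀ k, 2 ^ i * b j < k → k ≤ 2 ^ (i + 1) * b j →
      μ k = (2 : ℝ) ^ ((1 : ℝ) / (2 * 2 ^ i * (b j : ℝ))) * μ (k - 1))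
    (hμ0 : μ 0 = 1) :
    (∀ k ≥ 1, μ (2 * k) / μ k ≤ Real.sqrt 2 * A) ∧
    (∃ C ≥ (1 : ℝ), ∀ j k : ℕ,
      (∏ i ∈ Finset.range (j + k + 1), μ i) ≤
        C ^ (j + k + 1) * (∏ i ∈ Finset.range (j + 1), μ i) *
          (∏ i ∈ Finset.range (k + 1), μ i)) :=
  mu_moderate_growth_general A hA a b d μ hd hd1 ha1 hb ha hμa1 hblock1 hblock2 hμ0
end

section
/- Let q₀ := 2/A₀ > 1 for fixed 1 < A₀ < 2, and define a₁ = 1, b_j = 2^{d_j}a_j, a_{j+1} = 2^j b_j with (d_j) strictly increasing, d₁ ≥ 1; set μ_{a₁} = 1, μ_{b_j} = A^{d_j}μ_{a_j} and μ_{a_{j+1}} = 2^{j/2}μ_{b_j} for a parameter 1 < A ≤ A₀. Then for all j ≥ 1: (a_j/μ_{a_j})·((2/A)^{d_j} − 1)/((2/A) − 1) ≥ 1; consequently the block sums Σ_{k=a_j+1}^{b_j} 1/μ_k are bounded below by 1/A and Σ_{k≥1} 1/μ_k = +∞ (quasianalyticity). -/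
/-!
On the block `(a_j, b_j] = (a_j, 2^{d_j} a_j]` the weight is constant, equal to
`A^{i+1} μ(a_j)`, on each dyadic piece `(2^i a_j, 2^{i+1} a_j]`, so the block sum is
`(a_j / (A μ(a_j))) · Σ_{i < d_j} (2/A)^i`. Passing from `a_j` to `a_{j+1}` multiplies `a`
by `2^j 2^{d_j}` but `μ(a)` only by `2^{j/2} A^{d_j}`, and `A ≤ 2`, so `μ(a_j) ≤ a_j` for
all `j`.
Hence every block sum is at least `1/A`; by the Cauchy criterion a summable series has small
sums over all finite sets far enough out, which these blocks, escaping to infinity, contradict.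
-/

open Filter

open Finset

theorem not_summable_of_le_norm_sum_Ioc {E : Type*} [SeminormedAddCommGroup E] {f : ℕ → E}
    {lo hi : ℕ → ℕ} {c : ℝ} (hc : 0 < c) (hlo : Tendsto lo atTop atTop)
    (hblock : ∀ᶠ j in atTop, c ≤ ‖∑ k ∈ Ioc (lo j) (hi j), f k‖) : ¬ Summable f := by
  intro hf
  obtain ⟨s, hs⟩ := hf.vanishing (Metric.ball_mem_nhds 0 hc)
  obtain ⟨j, hj, hjs⟩ := (hblock.and (hlo.eventually_ge_atTop (s.sup id))).exists
  have hdisj : Disjoint (Ioc (lo j) (hi j)) s :=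
    disjoint_left.2 fun k hk hks => (mem_Ioc.1 hk).1.not_ge (hjs.trans' (le_sup (f := id) hks))
  exact (mem_ball_zero_iff.1 (hs _ hdisj)).not_ge hj

theorem one_le_geom_sum {R : Type*} [Semiring R] [PartialOrder R] [IsOrderedRing R] {x : R}
    (hx : 0 ≤ x) {n : ℕ} (hn : n ≠ 0) :
    1 ≤ ∑ i ∈ range n, x ^ i := by
  simpa using single_le_sum (fun i _ => pow_nonneg hx i) (mem_range.2 (Nat.pos_of_ne_zero hn))

theorem sum_one_div_Ioc_dyadic {μ : ℕ → ℝ} {A m : ℝ} {a d : ℕ}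
    (hblock : ∀ i < d, ∀ k, 2 ^ i * a < k → k ≤ 2 ^ (i + 1) * a →
      μ k = A ^ (i + 1) * m) :
    ∑ k ∈ Ioc a (2 ^ d * a), 1 / μ k = a / (A * m) * ∑ i ∈ range d, (2 / A) ^ i := by
  induction d with
  | zero => simp
  | succ d ih =>
    have hpiece : ∑ k ∈ Ioc (2 ^ d * a) (2 ^ (d + 1) * a), 1 / μ k
        = (2 ^ d * a : ℕ) * (1 / (A ^ (d + 1) * m)) := by
      rw [sum_congr rfl fun k hk => by
          rw [hblock d (Nat.lt_succ_self d) k (mem_Ioc.1 hk).1 (mem_Ioc.1 hk).2],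
        sum_const, Nat.card_Ioc, nsmul_eq_mul, pow_succ, mul_comm _ 2, mul_assoc,
        Nat.two_mul, Nat.add_sub_cancel]
    rw [← sum_Ioc_consecutive _ (Nat.le_mul_of_pos_left a (by positivity))
        (Nat.mul_le_mul_right a (Nat.pow_le_pow_right two_pos d.le_succ)),
      ih fun i hi => hblock i (Nat.lt_succ_of_lt hi), hpiece, sum_range_succ]
    push_cast
    ring

theorem pos_and_le_of_step {A : ℝ} (hA : 0 < A) (hA2 : A ≤ 2) {d : ℕ → ℕ}
    {x y : ℕ → ℝ}
    (hy1 : 0 < y 1) (hyx1 : y 1 ≤ x 1)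
    (hx : ∀ j ≥ 1, x (j + 1) = 2 ^ j * (2 ^ d j * x j))
    (hy : ∀ j ≥ 1, y (j + 1) = 2 ^ ((j : ℝ) / 2) * (A ^ d j * y j)) :
    ∀ j ≥ 1, 0 < y j ∧ y j ≤ x j := by
  intro j hj
  induction j, hj using Nat.le_induction with
  | base => exact ⟨hy1, hyx1⟩
  | succ j hj ih =>
    obtain ⟨hpos, hle⟩ := ih
    have hsqrt : (2 : ℝ) ^ ((j : ℝ) / 2) ≤ 2 ^ j := by
      rw [← Real.rpow_natCast]
      exact Real.rpow_le_rpow_of_exponent_le one_le_two (half_le_self j.cast_nonneg)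
    rw [hx j hj, hy j hj]
    refine ⟨by positivity, ?_⟩
    gcongr

theorem self_le_of_two_mul_le_succ {a : ℕ → ℕ} (h1 : 1 ≤ a 1)
    (h : ∀ j ≥ 1, 2 * a j ≤ a (j + 1)) : ∀ j ≥ 1, j ≤ a j := by
  intro j hj
  induction j, hj using Nat.le_induction with
  | base => exact h1
  | succ j hj ih => linarith [h j hj]

theorem mu_quasianalytic_general (A₀ A : ℝ) (hA₀2 : A₀ < 2)
    (hA : 1 < A) (hAA₀ : A ≤ A₀)
    (a b d : ℕ → ℕ) (μ : ℕ → ℝ)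
    (hd : StrictMonoOn d (Set.Ici 1)) (hd1 : 1 ≤ d 1)
    (ha1 : a 1 = 1)
    (hb : ∀ j ≥ 1, b j = 2 ^ (d j) * a j)
    (ha : ∀ j ≥ 1, a (j + 1) = 2 ^ j * b j)
    (hμa1 : μ (a 1) = 1)
    (hμb : ∀ j ≥ 1, μ (b j) = A ^ (d j) * μ (a j))
    (hμa : ∀ j ≥ 1, μ (a (j + 1)) = (2 : ℝ) ^ ((j : ℝ) / 2) * μ (b j))
    (hblock1 : ∀ j ≥ 1, ∀ i < d j, ∀ k, 2 ^ i * a j < k → k ≤ 2 ^ (i + 1) * a j →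
      μ k = A ^ (i + 1) * μ (a j)) :
    (∀ j ≥ 1, 1 ≤ (a j : ℝ) / μ (a j) * (((2 / A) ^ (d j) - 1) / (2 / A - 1))) ∧
    (∀ j ≥ 1, 1 / A ≤ ∑ k ∈ Finset.Ioc (a j) (b j), 1 / μ k) ∧
    ¬ Summable (fun k : ℕ => 1 / μ (k + 1)) := by
  have hA0 : 0 < A := by linarith
  have hA2 : A < 2 := hAA₀.trans_lt hA₀2
  have hq : 2 / A ≠ 1 := by rw [Ne, div_eq_one_iff_eq (by positivity)]; exact hA2.ne'
  have hdj : ∀ j ≥ 1, d j ≠ 0 := fun j hj =>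
    Nat.one_le_iff_ne_zero.1 <| hd1.trans <| hd.monotoneOn Set.self_mem_Ici hj hj
  have hμ := pos_and_le_of_step (by positivity) hA2.le (d := d) (x := fun j => (a j : ℝ))
    (y := fun j => μ (a j)) (hμa1 ▸ one_pos) (by rw [hμa1, ha1, Nat.cast_one])
    (fun j hj => by simp [ha j hj, hb j hj]) (fun j hj => by simp [hμa j hj, hμb j hj])
  have hratio : ∀ j ≥ 1, 1 ≤ (a j : ℝ) / μ (a j) * ∑ i ∈ range (d j), (2 / A) ^ i :=
    fun j hj => one_le_mul_of_one_le_of_one_le ((one_le_div (hμ j hj).1).2 (hμ j hj).2)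
      (one_le_geom_sum (by positivity) (hdj j hj))
  have hblock : ∀ j ≥ 1, 1 / A ≤ ∑ k ∈ Ioc (a j) (b j), 1 / μ k := fun j hj => by
    rw [hb j hj, sum_one_div_Ioc_dyadic (hblock1 j hj)]
    calc 1 / A = 1 / A * 1 := (mul_one _).symm
      _ ≤ 1 / A * ((a j : ℝ) / μ (a j) * ∑ i ∈ range (d j), (2 / A) ^ i) := by
        gcongr; exact hratio j hj
      _ = _ := by ring
  refine ⟨fun j hj => geom_sum_eq hq (d j) ▸ hratio j hj, hblock, ?_⟩
  have hgrow : ∀ j ≥ 1, j ≤ a j := self_le_of_two_mul_le_succ ha1.ge fun j hj => by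
    rw [ha j hj, hb j hj, ← mul_assoc]
    calc 2 * a j = 2 ^ 1 * 2 ^ 0 * a j := by ring
      _ ≤ 2 ^ j * 2 ^ d j * a j := by gcongr <;> omega
  rw [summable_nat_add_iff (f := fun k => 1 / μ k) 1]
  refine not_summable_of_le_norm_sum_Ioc (hi := b) (c := 1 / A) (by positivity)
    (tendsto_atTop_mono' atTop ((eventually_ge_atTop 1).mono hgrow) tendsto_id) ?_
  filter_upwards [eventually_ge_atTop 1] with j hj
  exact (hblock j hj).trans (Real.le_norm_self _)

theorem mu_quasianalytic (A₀ A : ℝ) (hA₀ : 1 < A₀) (hA₀2 : A₀ < 2)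
    (hA : 1 < A) (hAA₀ : A ≤ A₀)
    (a b d : ℕ → ℕ) (μ : ℕ → ℝ)
    (hd : StrictMonoOn d (Set.Ici 1)) (hd1 : 1 ≤ d 1)
    (ha1 : a 1 = 1)
    (hb : ∀ j ≥ 1, b j = 2 ^ (d j) * a j)
    (ha : ∀ j ≥ 1, a (j + 1) = 2 ^ j * b j)
    (hμa1 : μ (a 1) = 1)
    (hμb : ∀ j ≥ 1, μ (b j) = A ^ (d j) * μ (a j))
    (hμa : ∀ j ≥ 1, μ (a (j + 1)) = (2 : ℝ) ^ ((j : ℝ) / 2) * μ (b j))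
    (hblock1 : ∀ j ≥ 1, ∀ i < d j, ∀ k, 2 ^ i * a j < k → k ≤ 2 ^ (i + 1) * a j →
      μ k = A ^ (i + 1) * μ (a j))
    (hblock2 : ∀ j ≥ 1, ∀ i < j, ∀ k, 2 ^ i * b j < k → k ≤ 2 ^ (i + 1) * b j →
      μ k = (2 : ℝ) ^ ((1 : ℝ) / (2 * 2 ^ i * (b j : ℝ))) * μ (k - 1)) :
    (∀ j ≥ 1, 1 ≤ (a j : ℝ) / μ (a j) * (((2 / A) ^ (d j) - 1) / (2 / A - 1))) ∧
    (∀ j ≥ 1, 1 / A ≤ ∑ k ∈ Finset.Ioc (a j) (b j), 1 / μ k) ∧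
    ¬ Summable (fun k : ℕ => 1 / μ (k + 1)) :=
  mu_quasianalytic_general A₀ A hA₀2 hA hAA₀ a b d μ hd hd1 ha1 hb ha hμa1 hμb hμa hblock1
end
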